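/- arXiv:2207.04180 — 7 statements merged into one kernel-verified Lean document; each statement's English description precedes it below -/
import Mathlib

section
/- Let β > 0 with β not an integer. Then lim_{k→∞} (−1)^k Γ(−β) k^{1+β} C(β, k) = 1, where Γ is the Gamma function. -/
/-- Generalized binomial coefficient `C(β, k) = β(β−1)⋯(β−k+1)/k!`. -/
noncomputable def genBinom (β : ℝ) (k : ℕ) : ℝ :=
  (∏ i ∈ Finset.range k, (β - i)) / (Nat.factorial k)

/-- For `β > 0` not an integer, `(−1)^k Γ(−β) k^{1+β} C(β, k) → 1` as `k → ∞`. -/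
theorem stmt2 (β : ℝ) (hβ : 0 < β) (hβnotint : ∀ m : ℕ, β ≠ m) :
    Filter.Tendsto
      (fun k : ℕ => (-1 : ℝ) ^ k * Real.Gamma (-β) * (k : ℝ) ^ (1 + β) * genBinom β k)
      Filter.atTop (nhds 1) := by
  have hΓ : Real.Gamma (-β) ≠ 0 := by
    refine Real.Gamma_ne_zero fun m hm => hβnotint m ?_
    linarith [hm]
  rw [← Filter.tendsto_add_atTop_iff_nat 1]
  have key : ∀ n : ℕ, 1 ≤ n →
      (-1 : ℝ) ^ (n + 1) * Real.Gamma (-β) * ((n + 1 : ℕ) : ℝ) ^ (1 + β) * genBinom β (n + 1)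
        = Real.Gamma (-β) * (((n : ℝ) + 1) / n) ^ β / Real.GammaSeq (-β) n := by
    intro n hn
    have hnpos : (0 : ℝ) < n := by exact_mod_cast hn
    have hn1pos : (0 : ℝ) < (n : ℝ) + 1 := by positivity
    have hP : (∏ i ∈ Finset.range (n + 1), (-β + (i : ℝ))) ≠ 0 := by
      refine Finset.prod_ne_zero_iff.2 fun i _ hi => hβnotint i ?_
      linarith [hi]
    have hprod : (∏ i ∈ Finset.range (n + 1), (β - (i : ℝ)))
        = (-1 : ℝ) ^ (n + 1) * ∏ i ∈ Finset.range (n + 1), (-β + (i : ℝ)) := by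
      have h : ∀ i ∈ Finset.range (n + 1), (β - (i : ℝ)) = (-1) * (-β + (i : ℝ)) :=
        fun i _ => by ring
      rw [Finset.prod_congr rfl h, Finset.prod_mul_distrib, Finset.prod_const, Finset.card_range]
    have hfact : (n.factorial : ℝ) ≠ 0 := by exact_mod_cast n.factorial_ne_zero
    have hrp : ((n : ℝ)) ^ (-β) ≠ 0 := (Real.rpow_pos_of_pos hnpos _).ne'
    have hdiv : (((n : ℝ) + 1) / n) ^ β = ((n : ℝ) + 1) ^ β * (n : ℝ) ^ (-β) := by
      rw [Real.div_rpow hn1pos.le hnpos.le, Real.rpow_neg hnpos.le, div_eq_mul_inv]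
    have hpow : (((n : ℕ) : ℝ) + 1) ^ (1 + β) = ((n : ℝ) + 1) * ((n : ℝ) + 1) ^ β := by
      rw [Real.rpow_add hn1pos, Real.rpow_one]
    rw [genBinom, Real.GammaSeq, hprod, hdiv]
    push_cast
    rw [hpow, Nat.factorial_succ]
    push_cast
    field_simp
    ring_nf
    rw [show ((-1 : ℝ)) ^ (n * 2) = 1 from Even.neg_one_pow ⟨n, by ring⟩]
  have hlim1 : Filter.Tendsto (fun n : ℕ => ((n : ℝ) + 1) / n) Filter.atTop (nhds 1) := by
    have h0 : Filter.Tendsto (fun n : ℕ => 1 + 1 / (n : ℝ)) Filter.atTop (nhds 1) := by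
      simpa using (tendsto_const_nhds (x := (1 : ℝ))).add tendsto_one_div_atTop_nhds_zero_nat
    refine h0.congr' ?_
    filter_upwards [Filter.eventually_ge_atTop 1] with n hn
    have hnpos : (0 : ℝ) < n := by exact_mod_cast hn
    field_simp
  have hlim2 : Filter.Tendsto (fun n : ℕ => (((n : ℝ) + 1) / n) ^ β) Filter.atTop (nhds 1) := by
    have hc := (Real.continuousAt_rpow_const 1 β (Or.inl one_ne_zero)).tendsto.comp hlim1
    simpa [Function.comp_def] using hc
  have hmain : Filter.Tendsto
      (fun n : ℕ => Real.Gamma (-β) * (((n : ℝ) + 1) / n) ^ β / Real.GammaSeq (-β) n)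
      Filter.atTop (nhds 1) := by
    have := ((tendsto_const_nhds (x := Real.Gamma (-β))).mul hlim2).div
      (Real.GammaSeq_tendsto_Gamma (-β)) hΓ
    simpa [div_self hΓ, Pi.div_def] using this
  refine Filter.Tendsto.congr' ?_ hmain
  filter_upwards [Filter.eventually_ge_atTop 1] with n hn
  exact (key n hn).symm
end

section
/- Let n ≥ 1 be an integer and 0 < δ < n. Then there exists a constant C = C(n, δ) > 0 such that for every y ∈ ℝⁿ∖{0}, 𝓑_δ(y) ≤ C e^{−|y|} (1 + |y|^{δ−n}). -/
open MeasureTheory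
open scoped Real

/-- The integrand defining the Bessel kernel `𝓑_b`. -/
noncomputable def besselIntegrand (n : ℕ) (b : ℝ) (y : EuclideanSpace ℝ (Fin n)) (t : ℝ) : ℝ :=
  Real.exp (-t / (4 * π)) * Real.exp (-π * ‖y‖ ^ 2 / t) * t ^ ((b - n) / 2 - 1)

/-- The Bessel kernel
`𝓑_b(y) = (4π)^{−b/2} Γ(b/2)^{−1} ∫₀^∞ e^{−δ/(4π)} e^{−π|y|²/δ} δ^{(b−n)/2} dδ/δ`. -/
noncomputable def besselKernel (n : ℕ) (b : ℝ) (y : EuclideanSpace ℝ (Fin n)) : ℝ :=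
  ((4 * π) ^ (b / 2) * Real.Gamma (b / 2))⁻¹ * ∫ t in Set.Ioi (0 : ℝ), besselIntegrand n b y t

lemma besselAux_meas (β : ℝ) :
    Measurable fun u : ℝ => Real.exp (-π / u) * u ^ β := by
  fun_prop

lemma besselAux_integrable {β : ℝ} (hβ : β < -1) :
    IntegrableOn (fun u : ℝ => Real.exp (-π / u) * u ^ β) (Set.Ioi (0:ℝ)) := by
  have hm := besselAux_meas β
  rw [← Set.Ioc_union_Ioi_eq_Ioi (zero_le_one : (0:ℝ) ≤ 1)]
  apply IntegrableOn.union
  · set k : ℕ := ⌈-β⌉₊ with hk_def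
    have hk : -β ≤ (k : ℝ) := Nat.le_ceil _
    have hπ := Real.pi_pos
    refine Integrable.mono' (g := fun _ => (Nat.factorial k : ℝ) / π ^ k)
      (integrableOn_const measure_Ioc_lt_top.ne) hm.aestronglyMeasurable ?_
    filter_upwards [ae_restrict_mem measurableSet_Ioc] with u hu
    have hu0 : 0 < u := hu.1
    have hπu : 0 < π / u := div_pos hπ hu0
    have h1 : (π/u) ^ k / (Nat.factorial k : ℝ) ≤ Real.exp (π/u) := Real.pow_div_factorial_le_exp _ hπu.le k
    have hfact : (0:ℝ) < (Nat.factorial k : ℝ) := by positivity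
    have hpk : (0:ℝ) < (π/u) ^ k / (Nat.factorial k : ℝ) := by positivity
    have h2 : Real.exp (-π/u) ≤ (Nat.factorial k : ℝ) * u ^ k / π ^ k := by
      have : Real.exp (-π/u) = (Real.exp (π/u))⁻¹ := by
        rw [← Real.exp_neg]; ring_nf
      rw [this]
      have h3 : (Real.exp (π/u))⁻¹ ≤ ((π/u) ^ k / (Nat.factorial k : ℝ))⁻¹ :=
        inv_anti₀ hpk h1
      refine h3.trans (le_of_eq ?_)
      rw [div_pow, div_div, inv_div]
      ring
    have hnorm : ‖Real.exp (-π/u) * u ^ β‖ = Real.exp (-π/u) * u ^ β := by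
      rw [Real.norm_eq_abs, abs_of_nonneg]
      exact mul_nonneg (Real.exp_nonneg _) (Real.rpow_nonneg hu0.le _)
    rw [hnorm]
    calc Real.exp (-π/u) * u ^ β ≤ ((Nat.factorial k : ℝ) * u ^ k / π ^ k) * u ^ β :=
          mul_le_mul_of_nonneg_right h2 (Real.rpow_nonneg hu0.le _)
      _ = ((Nat.factorial k : ℝ) / π ^ k) * ((u : ℝ) ^ ((k : ℝ) + β)) := by
          rw [Real.rpow_add hu0, Real.rpow_natCast]; ring
      _ ≤ ((Nat.factorial k : ℝ) / π ^ k) * 1 := by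
          refine mul_le_mul_of_nonneg_left (Real.rpow_le_one hu0.le hu.2 (by linarith)) ?_
          positivity
      _ = (Nat.factorial k : ℝ) / π ^ k := mul_one _
  · refine Integrable.mono' (integrableOn_Ioi_rpow_of_lt hβ one_pos)
      hm.aestronglyMeasurable ?_
    filter_upwards [ae_restrict_mem measurableSet_Ioi] with u hu
    have hu0 : (0:ℝ) < u := lt_trans one_pos hu
    have hnorm : ‖Real.exp (-π/u) * u ^ β‖ = Real.exp (-π/u) * u ^ β := by
      rw [Real.norm_eq_abs, abs_of_nonneg]
      exact mul_nonneg (Real.exp_nonneg _) (Real.rpow_nonneg hu0.le _)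
    rw [hnorm]
    calc Real.exp (-π/u) * u ^ β ≤ 1 * u ^ β := by
          refine mul_le_mul_of_nonneg_right ?_ (Real.rpow_nonneg hu0.le _)
          rw [Real.exp_le_one_iff, neg_div]
          have : 0 ≤ π / u := (div_pos Real.pi_pos hu0).le
          linarith
      _ = u ^ β := one_mul _

/-- For `0 < δ < n`, `𝓑_δ(y) ≤ C e^{−|y|}(1 + |y|^{δ−n})` on `ℝⁿ∖{0}`. -/
theorem stmt7 (n : ℕ) (hn : 1 ≤ n) (δ : ℝ) (hδ0 : 0 < δ) (hδn : δ < n) :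
    ∃ C : ℝ, 0 < C ∧ ∀ y : EuclideanSpace ℝ (Fin n), y ≠ 0 →
      besselKernel n δ y ≤ C * Real.exp (-‖y‖) * (1 + ‖y‖ ^ (δ - n)) := by
  have hπ := Real.pi_pos
  set β : ℝ := (δ - n) / 2 - 1 with hβ_def
  have hβ : β < -1 := by
    have h0 : δ - (n : ℝ) < 0 := by linarith
    rw [hβ_def]; linarith
  have haux := besselAux_integrable hβ
  set C₀ : ℝ := ∫ u in Set.Ioi (0:ℝ), Real.exp (-π / u) * u ^ β with hC₀_def
  have hC₀ : 0 ≤ C₀ := by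
    rw [hC₀_def]
    exact setIntegral_nonneg measurableSet_Ioi
      (fun u hu => mul_nonneg (Real.exp_nonneg _) (Real.rpow_nonneg (le_of_lt hu) _))
  set B : ℝ := ((4 * π) ^ (δ / 2) * Real.Gamma (δ / 2))⁻¹ with hB_def
  have hB : 0 < B := by
    rw [hB_def]
    exact inv_pos.2 (mul_pos (Real.rpow_pos_of_pos (by linarith) _)
      (Real.Gamma_pos_of_pos (by linarith)))
  have hD : 0 ≤ Real.exp 1 * B * C₀ :=
    mul_nonneg (mul_nonneg (Real.exp_pos 1).le hB.le) hC₀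
  refine ⟨Real.exp 1 * B * C₀ + 1, by linarith, ?_⟩
  intro y hy
  set r : ℝ := ‖y‖ with hr_def
  have hr : 0 < r := norm_pos_iff.2 hy
  have hr2 : 0 < r ^ 2 := by positivity
  have hP : 0 ≤ r ^ (δ - (n : ℝ)) := Real.rpow_nonneg hr.le _
  have hE : 0 < Real.exp (-r) := Real.exp_pos _
  have hkernel : besselKernel n δ y = B * ∫ t in Set.Ioi (0:ℝ), besselIntegrand n δ y t := by
    rw [besselKernel, ← hB_def]
  have hnonneg : ∀ t, t ∈ Set.Ioi (0:ℝ) → 0 ≤ besselIntegrand n δ y t := by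
    intro t ht
    exact mul_nonneg (mul_nonneg (Real.exp_nonneg _) (Real.exp_nonneg _))
      (Real.rpow_nonneg (le_of_lt ht) _)
  rw [hkernel]
  clear_value β C₀ B r
  rcases le_or_gt r 1 with h1 | h1
  · -- small r
    have hEq : ∀ x ∈ Set.Ioi (0:ℝ), (r ^ 2) ^ β * (Real.exp (-π / x) * x ^ β)
        = Real.exp (-π * r ^ 2 / (r ^ 2 * x)) * (r ^ 2 * x) ^ β := by
      intro x hx
      have hx0 : (0:ℝ) < x := hx
      rw [show -π * r ^ 2 / (r ^ 2 * x) = -π / x by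
            rw [mul_comm (-π) (r ^ 2), mul_div_mul_left _ _ (ne_of_gt hr2)],
          Real.mul_rpow hr2.le hx0.le]
      ring
    have hg1_int : IntegrableOn (fun t => Real.exp (-π * r ^ 2 / t) * t ^ β)
        (Set.Ioi (0:ℝ)) := by
      have h := (integrableOn_Ioi_comp_mul_left_iff
        (fun t => Real.exp (-π * r ^ 2 / t) * t ^ β) 0 hr2)
      rw [mul_zero] at h
      refine h.1 ?_
      exact IntegrableOn.congr_fun (haux.const_mul ((r ^ 2) ^ β)) hEq measurableSet_Ioi
    have hIle : (∫ t in Set.Ioi (0:ℝ), besselIntegrand n δ y t) ≤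
        ∫ t in Set.Ioi (0:ℝ), Real.exp (-π * r ^ 2 / t) * t ^ β := by
      refine integral_mono_of_nonneg ?_ hg1_int ?_
      · filter_upwards [ae_restrict_mem measurableSet_Ioi] with t ht
        exact hnonneg t ht
      · filter_upwards [ae_restrict_mem measurableSet_Ioi] with t ht
        have ht0 : (0:ℝ) < t := ht
        simp only [besselIntegrand]
        rw [← hr_def, ← hβ_def]
        have h4 : Real.exp (-t / (4 * π)) ≤ 1 := by
          rw [Real.exp_le_one_iff]
          apply div_nonpos_of_nonpos_of_nonneg <;> [linarith; positivity]
        have h5 : 0 ≤ Real.exp (-π * r ^ 2 / t) * t ^ β :=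
          mul_nonneg (Real.exp_nonneg _) (Real.rpow_nonneg ht0.le _)
        calc Real.exp (-t / (4 * π)) * Real.exp (-π * r ^ 2 / t) * t ^ β
            = Real.exp (-t / (4 * π)) * (Real.exp (-π * r ^ 2 / t) * t ^ β) := by ring
          _ ≤ 1 * (Real.exp (-π * r ^ 2 / t) * t ^ β) := mul_le_mul_of_nonneg_right h4 h5
          _ = Real.exp (-π * r ^ 2 / t) * t ^ β := one_mul _
    have heq : (∫ x in Set.Ioi (0:ℝ),
          Real.exp (-π * r ^ 2 / (r ^ 2 * x)) * (r ^ 2 * x) ^ β) = (r ^ 2) ^ β * C₀ := by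
      rw [hC₀_def, ← integral_const_mul]
      exact (setIntegral_congr_fun measurableSet_Ioi hEq).symm
    have hcv := integral_comp_mul_left_Ioi
      (fun t => Real.exp (-π * r ^ 2 / t) * t ^ β) 0 hr2
    rw [mul_zero, smul_eq_mul] at hcv
    have hval : (∫ t in Set.Ioi (0:ℝ), Real.exp (-π * r ^ 2 / t) * t ^ β)
        = r ^ 2 * ((r ^ 2) ^ β * C₀) := by
      rw [← heq, hcv, ← mul_assoc, mul_inv_cancel₀ (ne_of_gt hr2), one_mul]
    have hpow : r ^ 2 * (r ^ 2) ^ β = r ^ (δ - (n : ℝ)) := by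
      have e1 : r ^ 2 * (r ^ 2) ^ β = (r ^ 2) ^ (1 + β) := by
        rw [Real.rpow_add hr2, Real.rpow_one]
      have e2 : (1 : ℝ) + β = (δ - n) / 2 := by rw [hβ_def]; ring
      rw [e1, e2, ← Real.rpow_natCast r 2, ← Real.rpow_mul hr.le]
      congr 1
      push_cast
      ring
    have hfinal : (∫ t in Set.Ioi (0:ℝ), besselIntegrand n δ y t)
        ≤ r ^ (δ - (n : ℝ)) * C₀ := by
      rw [← hpow, mul_assoc]
      exact hIle.trans_eq hval
    have hEr : Real.exp (-1) ≤ Real.exp (-r) := Real.exp_le_exp.2 (by linarith)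
    have he : Real.exp 1 * Real.exp (-1) = 1 := by
      rw [← Real.exp_add]; norm_num
    have hBI : B * (∫ t in Set.Ioi (0:ℝ), besselIntegrand n δ y t)
        ≤ B * (r ^ (δ - (n : ℝ)) * C₀) := mul_le_mul_of_nonneg_left hfinal hB.le
    have key : (Real.exp 1 * B * C₀) * Real.exp (-1) * r ^ (δ - (n : ℝ))
        ≤ (Real.exp 1 * B * C₀) * Real.exp (-r) * r ^ (δ - (n : ℝ)) := by
      apply mul_le_mul_of_nonneg_right _ hP
      exact mul_le_mul_of_nonneg_left hEr hD
    have hB0 : B * (r ^ (δ - (n : ℝ)) * C₀)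
        = (Real.exp 1 * B * C₀) * Real.exp (-1) * r ^ (δ - (n : ℝ)) := by
      rw [show Real.exp 1 * B * C₀ * Real.exp (-1) * r ^ (δ - (n:ℝ))
          = (Real.exp 1 * Real.exp (-1)) * (B * C₀ * r ^ (δ - (n:ℝ))) by ring, he]
      ring
    have hexpand : 0 ≤ (Real.exp 1 * B * C₀) * Real.exp (-r)
        + Real.exp (-r) + Real.exp (-r) * r ^ (δ - (n : ℝ)) := by
      have := mul_nonneg hD hE.le
      have := mul_nonneg hE.le hP
      linarith
    calc B * (∫ t in Set.Ioi (0:ℝ), besselIntegrand n δ y t)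
        ≤ (Real.exp 1 * B * C₀) * Real.exp (-r) * r ^ (δ - (n : ℝ)) := by
          rw [hB0] at hBI; exact hBI.trans key
      _ ≤ (Real.exp 1 * B * C₀ + 1) * Real.exp (-r) * (1 + r ^ (δ - (n : ℝ))) := by
          linarith [mul_nonneg hD hE.le, mul_nonneg hE.le hP,
            mul_nonneg (mul_nonneg hD hE.le) hP]
  · -- large r
    have h1' : (1:ℝ) ≤ r := h1.le
    have hcv := integral_comp_mul_left_Ioi (besselIntegrand n δ y) 0 hr
    rw [mul_zero, smul_eq_mul] at hcv
    have hJle : (∫ s in Set.Ioi (0:ℝ), besselIntegrand n δ y (r * s))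
        ≤ (Real.exp (1 - r) * r ^ β) * C₀ := by
      rw [hC₀_def, ← integral_const_mul]
      refine integral_mono_of_nonneg ?_ (haux.const_mul _) ?_
      · filter_upwards [ae_restrict_mem measurableSet_Ioi] with s hs
        exact hnonneg _ (mul_pos hr hs)
      · filter_upwards [ae_restrict_mem measurableSet_Ioi] with s hs
        have hs0 : (0:ℝ) < s := hs
        have hrs : 0 < r * s := mul_pos hr hs0
        simp only [besselIntegrand]
        rw [← hr_def, ← hβ_def]
        have hφ : s / (4 * π) + π / s - 1 = (s - 2 * π) ^ 2 / (4 * π * s) := by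
          field_simp; ring
        have hφ1 : 1 ≤ s / (4 * π) + π / s := by
          have h2 : 0 ≤ (s - 2 * π) ^ 2 / (4 * π * s) := by positivity
          linarith
        have hexp : -(r * s) / (4 * π) + -π * r ^ 2 / (r * s) ≤ 1 - r + -π / s := by
          have e1 : -(r * s) / (4 * π) = -(r * (s / (4 * π))) := by ring
          have e2 : -π * r ^ 2 / (r * s) = -(r * (π / s)) := by
            field_simp
          have e3 : -π / s = -(π / s) := by ring
          have hqs : 0 ≤ s / (4 * π) := by positivity
          have key : r - 1 + π / s ≤ r * (s / (4 * π) + π / s) := by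
            nlinarith [mul_nonneg (sub_nonneg.2 h1') (sub_nonneg.2 hφ1)]
          rw [e1, e2, e3]; linarith [key]
        have hmul : Real.exp (-(r * s) / (4 * π)) * Real.exp (-π * r ^ 2 / (r * s))
            ≤ Real.exp (1 - r) * Real.exp (-π / s) := by
          rw [← Real.exp_add, ← Real.exp_add]
          exact Real.exp_le_exp.2 hexp
        have hpow : (r * s) ^ β = r ^ β * s ^ β := Real.mul_rpow hr.le hs0.le
        calc Real.exp (-(r * s) / (4 * π)) * Real.exp (-π * r ^ 2 / (r * s)) * (r * s) ^ β
            ≤ (Real.exp (1 - r) * Real.exp (-π / s)) * (r ^ β * s ^ β) := by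
              rw [hpow]
              exact mul_le_mul_of_nonneg_right hmul
                (mul_nonneg (Real.rpow_nonneg hr.le _) (Real.rpow_nonneg hs0.le _))
          _ = Real.exp (1 - r) * r ^ β * (Real.exp (-π / s) * s ^ β) := by ring
    have hIval : (∫ t in Set.Ioi (0:ℝ), besselIntegrand n δ y t)
        = r * ∫ s in Set.Ioi (0:ℝ), besselIntegrand n δ y (r * s) := by
      rw [hcv, ← mul_assoc, mul_inv_cancel₀ (ne_of_gt hr), one_mul]
    have hIle : (∫ t in Set.Ioi (0:ℝ), besselIntegrand n δ y t)
        ≤ r * ((Real.exp (1 - r) * r ^ β) * C₀) := by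
      rw [hIval]
      exact mul_le_mul_of_nonneg_left hJle hr.le
    have hr1β : r * r ^ β = r ^ (1 + β) := by rw [Real.rpow_add hr, Real.rpow_one]
    have hrle1 : r ^ ((1:ℝ) + β) ≤ 1 := by
      apply Real.rpow_le_one_of_one_le_of_nonpos h1'
      rw [hβ_def]
      have : δ - (n:ℝ) < 0 := by linarith
      linarith
    have hIle2 : (∫ t in Set.Ioi (0:ℝ), besselIntegrand n δ y t)
        ≤ Real.exp (1 - r) * C₀ := by
      have e4 : r * ((Real.exp (1 - r) * r ^ β) * C₀)
          = (Real.exp (1 - r) * C₀) * (r ^ ((1:ℝ) + β)) := by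
        rw [← hr1β]; ring
      have e5 : (Real.exp (1 - r) * C₀) * (r ^ ((1:ℝ) + β)) ≤ (Real.exp (1 - r) * C₀) * 1 :=
        mul_le_mul_of_nonneg_left hrle1 (mul_nonneg (Real.exp_nonneg _) hC₀)
      calc (∫ t in Set.Ioi (0:ℝ), besselIntegrand n δ y t)
          ≤ r * ((Real.exp (1 - r) * r ^ β) * C₀) := hIle
        _ = (Real.exp (1 - r) * C₀) * (r ^ ((1:ℝ) + β)) := e4
        _ ≤ (Real.exp (1 - r) * C₀) * 1 := e5
        _ = Real.exp (1 - r) * C₀ := mul_one _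
    have hsub : Real.exp (1 - r) = Real.exp 1 * Real.exp (-r) := by
      rw [← Real.exp_add]; ring_nf
    have hBI : B * (∫ t in Set.Ioi (0:ℝ), besselIntegrand n δ y t)
        ≤ (Real.exp 1 * B * C₀) * Real.exp (-r) := by
      have := mul_le_mul_of_nonneg_left hIle2 hB.le
      calc B * (∫ t in Set.Ioi (0:ℝ), besselIntegrand n δ y t)
          ≤ B * (Real.exp (1 - r) * C₀) := this
        _ = (Real.exp 1 * B * C₀) * Real.exp (-r) := by rw [hsub]; ring
    calc B * (∫ t in Set.Ioi (0:ℝ), besselIntegrand n δ y t)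
        ≤ (Real.exp 1 * B * C₀) * Real.exp (-r) := hBI
      _ ≤ (Real.exp 1 * B * C₀ + 1) * Real.exp (-r) * (1 + r ^ (δ - (n : ℝ))) := by
          linarith [mul_nonneg hD hE.le, mul_nonneg hE.le hP,
            mul_nonneg (mul_nonneg hD hE.le) hP]
end

section
/- Let n ≥ 1 be an integer. Then there exists a constant C = C(n) > 0 such that for every y ∈ ℝⁿ∖{0}, 𝓑_n(y) ≤ C e^{−|y|} (1 + log⁺(1/|y|)), where log⁺ t := max(log t, 0). -/
open MeasureTheory
open scoped Real

open Set Filter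

namespace BesselAux

noncomputable def F (r t : ℝ) : ℝ :=
  Real.exp (-t / (4 * π)) * Real.exp (-π * r ^ 2 / t) * t⁻¹

lemma F_meas (r : ℝ) : Measurable (F r) := by
  unfold F; fun_prop

lemma F_nonneg {r t : ℝ} (ht : 0 < t) : 0 ≤ F r t :=
  mul_nonneg (mul_nonneg (Real.exp_pos _).le (Real.exp_pos _).le) (inv_nonneg.mpr ht.le)

lemma exp_neg_le_inv' {x : ℝ} (hx : 0 < x) : Real.exp (-x) ≤ x⁻¹ := by
  rw [Real.exp_neg]
  exact inv_anti₀ hx ((Real.add_one_le_exp x).trans' (by linarith))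

lemma hkey {r t : ℝ} (hr : 0 < r) (ht : 0 < t) :
    Real.exp (-t / (4 * π)) * Real.exp (-π * r ^ 2 / t)
      = Real.exp (-r) * Real.exp (-((t - 2 * π * r) ^ 2 / (4 * π * t))) := by
  rw [← Real.exp_add, ← Real.exp_add]
  congr 1
  have hπ := Real.pi_pos
  field_simp
  ring

lemma piece {f g : ℝ → ℝ} {S : Set ℝ} (hS : MeasurableSet S) (hf : Measurable f)
    (hg : IntegrableOn g S) (h0 : ∀ t ∈ S, 0 ≤ f t) (hb : ∀ t ∈ S, f t ≤ g t) :
    IntegrableOn f S ∧ ∫ t in S, f t ≤ ∫ t in S, g t := by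
  have hint : IntegrableOn f S := by
    apply Integrable.mono hg (hf.aestronglyMeasurable.restrict)
    refine (ae_restrict_iff' hS).2 (Eventually.of_forall fun t ht => ?_)
    rw [Real.norm_eq_abs, abs_of_nonneg (h0 t ht)]
    exact (hb t ht).trans (le_abs_self _)
  exact ⟨hint, setIntegral_mono_on hint hg hS hb⟩

lemma split3 {f : ℝ → ℝ} {a b : ℝ} (ha : 0 < a) (hab : a ≤ b)
    (h1 : IntegrableOn f (Ioc 0 a)) (h2 : IntegrableOn f (Ioc a b))
    (h3 : IntegrableOn f (Ioi b)) :
    ∫ t in Ioi (0:ℝ), f t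
      = (∫ t in Ioc 0 a, f t) + (∫ t in Ioc a b, f t) + ∫ t in Ioi b, f t := by
  have hU1 : Ioc (0:ℝ) a ∪ Ioc a b = Ioc 0 b := Ioc_union_Ioc_eq_Ioc ha.le hab
  have hU2 : Ioc (0:ℝ) b ∪ Ioi b = Ioi 0 := Ioc_union_Ioi_eq_Ioi (ha.trans_le hab).le
  rw [← hU2, setIntegral_union (Ioc_disjoint_Ioi le_rfl) measurableSet_Ioi
    (hU1 ▸ (h1.union h2)) h3, ← hU1,
    setIntegral_union (Ioc_disjoint_Ioc.mpr (by simp [hab])) measurableSet_Ioc h1 h2]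

lemma int_exp_Ioi (b a : ℝ) (hb : 0 < b) :
    ∫ t in Ioi a, Real.exp (-b*t) = Real.exp (-b*a)/b := by
  have h1 : ∀ x ∈ Ici a, HasDerivAt (fun t : ℝ => -b⁻¹ * Real.exp (-b*t)) (Real.exp (-b*x)) x := by
    intro x _
    have hd : HasDerivAt (fun t : ℝ => -b*t) (-b) x := by
      simpa using (hasDerivAt_id x).const_mul (-b)
    have h3 := ((Real.hasDerivAt_exp (-b*x)).comp x hd).const_mul (-b⁻¹)
    have he : -b⁻¹ * (Real.exp (-b*x) * -b) = Real.exp (-b*x) := by field_simp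
    rw [he] at h3
    exact h3
  have h2 : Tendsto (fun t : ℝ => -b⁻¹ * Real.exp (-b*t)) atTop (nhds 0) := by
    have hx : Tendsto (fun t : ℝ => -b*t) atTop atBot := by
      simp only [neg_mul]
      exact tendsto_neg_atTop_atBot.comp (tendsto_id.const_mul_atTop hb)
    simpa using (Real.tendsto_exp_atBot.comp hx).const_mul (-b⁻¹)
  rw [integral_Ioi_of_hasDerivAt_of_tendsto' h1 (exp_neg_integrableOn_Ioi a hb) h2]
  field_simp
  ring

lemma bound_small {r : ℝ} (hr : 0 < r) (hr1 : r ≤ 1) :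
    ∫ t in Ioi (0:ℝ), F r t ≤ 64 * Real.exp (-r) * (1 + max (Real.log (1/r)) 0) := by
  have hπ := Real.pi_pos
  have hs0 : (0:ℝ) < r^2 := by positivity
  have hs1 : r^2 ≤ 1 := by nlinarith
  set g1 : ℝ → ℝ := fun _ => (Real.exp (-r) * Real.exp 1) * (π * r^2)⁻¹ with hg1def
  set g2 : ℝ → ℝ := fun t => Real.exp (-r) * t⁻¹ with hg2def
  set g3 : ℝ → ℝ := fun t => (Real.exp (-r) * Real.exp 1) * Real.exp (-(4*π)⁻¹*t) with hg3def
  have hone : (1:ℝ) ≤ Real.exp (-r) * Real.exp 1 := by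
    rw [← Real.exp_add]
    exact Real.one_le_exp (by linarith)
  -- pointwise bounds
  have hb1 : ∀ t ∈ Ioc (0:ℝ) (r^2), F r t ≤ g1 t := by
    rintro t ⟨ht0, hts⟩
    have hE1 : Real.exp (-t / (4*π)) ≤ 1 :=
      Real.exp_le_one_iff.mpr (div_nonpos_of_nonpos_of_nonneg (by linarith) (by positivity))
    have hE2 : Real.exp (-π * r^2 / t) ≤ t * (π * r^2)⁻¹ := by
      have hx : 0 < π * r^2 / t := by positivity
      have h := exp_neg_le_inv' hx
      have h2 : -π * r^2 / t = -(π * r^2 / t) := by ring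
      have h3 : (π * r^2 / t)⁻¹ = t * (π*r^2)⁻¹ := by
        rw [div_eq_mul_inv, mul_inv, inv_inv, mul_comm]
      rw [h2, ← h3]
      exact h
    have hmul : F r t ≤ (π * r^2)⁻¹ := by
      have h := mul_le_mul (mul_le_mul hE1 hE2 (Real.exp_pos _).le zero_le_one)
        (le_refl t⁻¹) (inv_nonneg.mpr ht0.le) (by positivity)
      calc F r t ≤ 1 * (t * (π*r^2)⁻¹) * t⁻¹ := h
        _ = (π * r^2)⁻¹ := by
            field_simp
    calc F r t ≤ (π * r^2)⁻¹ := hmul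
      _ ≤ (Real.exp (-r) * Real.exp 1) * (π * r^2)⁻¹ :=
          le_mul_of_one_le_left (by positivity) hone
      _ = g1 t := rfl
  have hb2 : ∀ t ∈ Ioc (r^2) (1:ℝ), F r t ≤ g2 t := by
    rintro t ⟨ht0', ht1⟩
    have ht0 : 0 < t := hs0.trans ht0'
    have hprod : Real.exp (-t / (4*π)) * Real.exp (-π * r^2 / t) ≤ Real.exp (-r) := by
      rw [hkey hr ht0]
      have : Real.exp (-((t - 2*π*r)^2 / (4*π*t))) ≤ 1 :=
        Real.exp_le_one_iff.mpr (neg_nonpos.mpr (by positivity))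
      nth_rewrite 2 [← mul_one (Real.exp (-r))]
      exact mul_le_mul_of_nonneg_left this (Real.exp_pos _).le
    exact mul_le_mul_of_nonneg_right hprod (inv_nonneg.mpr ht0.le)
  have hb3 : ∀ t ∈ Ioi (1:ℝ), F r t ≤ g3 t := by
    intro t ht
    have ht1 : (1:ℝ) < t := ht
    have ht0 : 0 < t := by linarith
    have hE2 : Real.exp (-π * r^2 / t) ≤ 1 :=
      Real.exp_le_one_iff.mpr (div_nonpos_of_nonpos_of_nonneg
        (by nlinarith [sq_nonneg r, Real.pi_pos]) ht0.le)
    have hti : t⁻¹ ≤ 1 := by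
      rw [inv_le_one₀ ht0]; linarith
    have hE1 : Real.exp (-t / (4*π)) = Real.exp (-(4*π)⁻¹*t) := by
      congr 1; field_simp
    calc F r t ≤ Real.exp (-t/(4*π)) * 1 * 1 :=
          mul_le_mul (mul_le_mul_of_nonneg_left hE2 (Real.exp_pos _).le) hti
            (inv_nonneg.mpr ht0.le) (mul_nonneg (Real.exp_pos _).le zero_le_one)
      _ = Real.exp (-(4*π)⁻¹*t) := by rw [hE1]; ring
      _ ≤ (Real.exp (-r) * Real.exp 1) * Real.exp (-(4*π)⁻¹*t) :=
          le_mul_of_one_le_left (Real.exp_pos _).le hone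
      _ = g3 t := rfl
  -- integrability of majorants
  have hg1int : IntegrableOn g1 (Ioc (0:ℝ) (r^2)) :=
    integrableOn_const measure_Ioc_lt_top.ne
  have hg2int : IntegrableOn g2 (Ioc (r^2) (1:ℝ)) := by
    have h0 : IntervalIntegrable (fun t : ℝ => t⁻¹) volume (r^2) 1 :=
      intervalIntegrable_inv_iff.mpr (Or.inr (notMem_uIcc_of_lt hs0 one_pos))
    exact ((intervalIntegrable_iff_integrableOn_Ioc_of_le hs1).mp h0).const_mul _
  have hg3int : IntegrableOn g3 (Ioi (1:ℝ)) :=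
    (exp_neg_integrableOn_Ioi 1 (inv_pos.mpr (by positivity) : (0:ℝ) < (4*π)⁻¹)).const_mul _
  have hp1 := piece measurableSet_Ioc (F_meas r) hg1int (fun t ht => F_nonneg ht.1) hb1
  have hp2 := piece measurableSet_Ioc (F_meas r) hg2int
    (fun t ht => F_nonneg (hs0.trans ht.1)) hb2
  have hp3 := piece measurableSet_Ioi (F_meas r) hg3int
    (fun t ht => F_nonneg (lt_trans one_pos ht)) hb3
  rw [split3 hs0 hs1 hp1.1 hp2.1 hp3.1]
  -- integral values
  have hI1 : ∫ t in Ioc (0:ℝ) (r^2), g1 t ≤ Real.exp (-r) * 1 := by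
    rw [hg1def, setIntegral_const, smul_eq_mul, Real.volume_real_Ioc_of_le hs0.le]
    have he : Real.exp 1 ≤ π := by
      have := Real.exp_one_lt_d9; have := Real.pi_gt_three; linarith
    have : (r^2 - 0) * (Real.exp (-r) * Real.exp 1 * (π * r^2)⁻¹)
        = Real.exp (-r) * (Real.exp 1 / π) := by field_simp; ring
    rw [this]
    gcongr
    rw [div_le_one hπ]; exact he
  have hI2 : ∫ t in Ioc (r^2) (1:ℝ), g2 t
      = Real.exp (-r) * (2 * Real.log (1/r)) := by
    rw [hg2def, integral_const_mul]
    congr 1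
    rw [← intervalIntegral.integral_of_le hs1,
      integral_inv (notMem_uIcc_of_lt hs0 one_pos)]
    rw [one_div, one_div, Real.log_inv, Real.log_inv, Real.log_pow]
    push_cast; ring
  have hI3 : ∫ t in Ioi (1:ℝ), g3 t ≤ Real.exp (-r) * 35 := by
    rw [hg3def, integral_const_mul,
      int_exp_Ioi _ _ (inv_pos.mpr (by positivity) : (0:ℝ) < (4*π)⁻¹)]
    set X := Real.exp (-(4*π)⁻¹*1) with hX
    have h1 : X ≤ 1 := by
      rw [hX]
      apply Real.exp_le_one_iff.mpr
      rw [neg_mul]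
      exact neg_nonpos.mpr (by positivity)
    have h0 : 0 < X := Real.exp_pos _
    have hd : X / (4*π)⁻¹ = X * (4*π) := by field_simp
    rw [hd]
    have hcalc : Real.exp (-r) * Real.exp 1 * (X * (4*π))
        = Real.exp (-r) * (Real.exp 1 * (X * (4*π))) := by ring
    rw [hcalc]
    apply mul_le_mul_of_nonneg_left _ (Real.exp_pos (-r)).le
    have h3 : X * (4*π) ≤ 4*π := by nlinarith
    have h4 : Real.exp 1 * (X*(4*π)) ≤ Real.exp 1 * (4*π) :=
      mul_le_mul_of_nonneg_left h3 (Real.exp_pos 1).le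
    have h5 : Real.exp 1 * (4*π) ≤ 35 := by
      nlinarith [Real.exp_one_lt_d9, Real.pi_lt_d2, Real.pi_gt_three, Real.exp_pos 1]
    linarith
  have hL0 : 0 ≤ Real.log (1/r) := Real.log_nonneg (one_le_one_div hr hr1)
  have hL : max (Real.log (1/r)) 0 = Real.log (1/r) := max_eq_left hL0
  rw [hL]
  have e1 := hp1.2.trans hI1
  have e2 := hp2.2
  rw [hI2] at e2
  have e3 := hp3.2.trans hI3
  have hme := mul_nonneg (Real.exp_pos (-r)).le hL0
  nlinarith [Real.exp_pos (-r), hme, e1, e2, e3]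

lemma bound_large {r : ℝ} (hr1 : 1 ≤ r) :
    ∫ t in Ioi (0:ℝ), F r t ≤ 64 * Real.exp (-r) * (1 + max (Real.log (1/r)) 0) := by
  have hr : 0 < r := lt_of_lt_of_le one_pos hr1
  have hπ := Real.pi_pos
  have h8 : r ≤ 8*π*r := by nlinarith [Real.pi_gt_three]
  set β := (32*π^2*r)⁻¹ with hβdef
  have hβ : 0 < β := inv_pos.mpr (by positivity)
  set g1 : ℝ → ℝ := fun _ => Real.exp (-r) * (2*r^2)⁻¹ with hg1def
  set g2 : ℝ → ℝ := fun t => (Real.exp (-r) * r⁻¹) * Real.exp (-β * (t - 2*π*r)^2)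
    with hg2def
  set g3 : ℝ → ℝ := fun t => Real.exp (-(8*π)⁻¹ * t) with hg3def
  -- pointwise bounds
  have hb1 : ∀ t ∈ Ioc (0:ℝ) r, F r t ≤ g1 t := by
    rintro t ⟨ht0, htr⟩
    have hrt : r*t ≤ r^2 := by nlinarith
    have hexp : r + 2*r^2/t ≤ t/(4*π) + π*r^2/t := by
      have h0 : r + 2*r^2/t ≤ π*r^2/t := by
        rw [← sub_nonneg]
        have heq : π*r^2/t - (r + 2*r^2/t) = ((π - 2)*r^2 - r*t)/t := by
          field_simp
          ring
        rw [heq]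
        apply div_nonneg _ ht0.le
        nlinarith [Real.pi_gt_three]
      have h4 : 0 ≤ t/(4*π) := by positivity
      linarith
    have hprod : Real.exp (-t/(4*π)) * Real.exp (-π*r^2/t)
        ≤ Real.exp (-r) * (t * (2*r^2)⁻¹) := by
      calc Real.exp (-t/(4*π)) * Real.exp (-π*r^2/t)
          = Real.exp (-t/(4*π) + -π*r^2/t) := (Real.exp_add _ _).symm
        _ ≤ Real.exp (-r + -(2*r^2/t)) := Real.exp_le_exp.mpr (by
            have h5 : -t/(4*π) = -(t/(4*π)) := by ring
            have h6 : -π*r^2/t = -(π*r^2/t) := by ring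
            rw [h5, h6]; linarith)
        _ = Real.exp (-r) * Real.exp (-(2*r^2/t)) := Real.exp_add _ _
        _ ≤ Real.exp (-r) * (t * (2*r^2)⁻¹) := by
            apply mul_le_mul_of_nonneg_left _ (Real.exp_pos _).le
            have h7 := exp_neg_le_inv' (show (0:ℝ) < 2*r^2/t by positivity)
            rw [show (2*r^2/t)⁻¹ = t * (2*r^2)⁻¹ by
              rw [div_eq_mul_inv, mul_inv, inv_inv, mul_comm]] at h7
            exact h7
    have := mul_le_mul_of_nonneg_right hprod (inv_nonneg.mpr ht0.le)
    calc F r t ≤ (Real.exp (-r) * (t * (2*r^2)⁻¹)) * t⁻¹ := this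
      _ = g1 t := by
          rw [hg1def]
          field_simp
  have hb2 : ∀ t ∈ Ioc r (8*π*r), F r t ≤ g2 t := by
    rintro t ⟨htr, ht8⟩
    have ht0 : 0 < t := hr.trans htr
    have hdiv : (t - 2*π*r)^2/(32*π^2*r) ≤ (t - 2*π*r)^2/(4*π*t) :=
      div_le_div_of_nonneg_left (sq_nonneg _) (by positivity) (by nlinarith)
    have hE : Real.exp (-((t - 2*π*r)^2/(4*π*t))) ≤ Real.exp (-β * (t - 2*π*r)^2) := by
      apply Real.exp_le_exp.mpr
      have h9 : β * (t - 2*π*r)^2 ≤ (t - 2*π*r)^2/(4*π*t) := by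
        rw [hβdef, inv_mul_eq_div]
        exact hdiv
      linarith
    have hti : t⁻¹ ≤ r⁻¹ := inv_anti₀ hr htr.le
    have hFt : F r t = Real.exp (-r) * Real.exp (-((t - 2*π*r)^2/(4*π*t))) * t⁻¹ := by
      unfold F
      rw [hkey hr ht0]
    rw [hFt, hg2def]
    calc Real.exp (-r) * Real.exp (-((t - 2*π*r)^2/(4*π*t))) * t⁻¹
        ≤ Real.exp (-r) * Real.exp (-β * (t - 2*π*r)^2) * r⁻¹ := by
          apply mul_le_mul (mul_le_mul_of_nonneg_left hE (Real.exp_pos _).le) hti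
            (inv_nonneg.mpr ht0.le)
            (mul_nonneg (Real.exp_pos _).le (Real.exp_pos _).le)
      _ = (Real.exp (-r) * r⁻¹) * Real.exp (-β * (t - 2*π*r)^2) := by ring
  have hb3 : ∀ t ∈ Ioi (8*π*r), F r t ≤ g3 t := by
    intro t ht
    have ht8 : 8*π*r < t := ht
    have ht1 : (1:ℝ) < t := by nlinarith [Real.pi_gt_three]
    have ht0 : (0:ℝ) < t := by linarith
    have hE2 : Real.exp (-π * r^2 / t) ≤ 1 :=
      Real.exp_le_one_iff.mpr (div_nonpos_of_nonpos_of_nonneg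
        (by nlinarith [sq_nonneg r, Real.pi_pos]) ht0.le)
    have hti : t⁻¹ ≤ 1 := by
      rw [inv_le_one₀ ht0]; linarith
    have hE1 : Real.exp (-t / (4*π)) ≤ Real.exp (-(8*π)⁻¹*t) := by
      apply Real.exp_le_exp.mpr
      rw [show -t/(4*π) = -(t/(4*π)) by ring, show -(8*π)⁻¹*t = -(t/(8*π)) by ring,
        neg_le_neg_iff]
      apply div_le_div_of_nonneg_left ht0.le (by positivity)
      linarith
    calc F r t ≤ Real.exp (-(8*π)⁻¹*t) * 1 * 1 :=
          mul_le_mul (mul_le_mul hE1 hE2 (Real.exp_pos _).le (Real.exp_pos _).le) hti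
            (inv_nonneg.mpr ht0.le) (mul_nonneg (Real.exp_pos _).le zero_le_one)
      _ = g3 t := by rw [hg3def]; ring
  -- integrability
  have hg1int : IntegrableOn g1 (Ioc (0:ℝ) r) :=
    integrableOn_const measure_Ioc_lt_top.ne
  have hsh : Integrable (fun t : ℝ => Real.exp (-β * (t - 2*π*r)^2)) :=
    (integrable_exp_neg_mul_sq hβ).comp_sub_right (2*π*r)
  have hg2int : IntegrableOn g2 (Ioc r (8*π*r)) := (hsh.const_mul _).integrableOn
  have hg3int : IntegrableOn g3 (Ioi (8*π*r)) :=
    exp_neg_integrableOn_Ioi _ (inv_pos.mpr (by positivity) : (0:ℝ) < (8*π)⁻¹)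
  have hp1 := piece measurableSet_Ioc (F_meas r) hg1int (fun t ht => F_nonneg ht.1) hb1
  have hp2 := piece measurableSet_Ioc (F_meas r) hg2int
    (fun t ht => F_nonneg (hr.trans ht.1)) hb2
  have hp3 := piece measurableSet_Ioi (F_meas r) hg3int
    (fun t ht => F_nonneg ((by positivity : (0:ℝ) < 8*π*r).trans ht)) hb3
  rw [split3 hr h8 hp1.1 hp2.1 hp3.1]
  -- integral values
  have hI1 : ∫ t in Ioc (0:ℝ) r, g1 t ≤ Real.exp (-r) * 1 := by
    rw [hg1def, setIntegral_const, smul_eq_mul, Real.volume_real_Ioc_of_le hr.le]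
    have heq : (r - 0) * (Real.exp (-r) * (2*r^2)⁻¹) = Real.exp (-r) * (1/(2*r)) := by
      field_simp
      ring
    rw [heq]
    gcongr
    rw [div_le_one (by positivity)]
    linarith
  have hI2 : ∫ t in Ioc r (8*π*r), g2 t ≤ Real.exp (-r) * 32 := by
    rw [hg2def, integral_const_mul]
    have hset : ∫ t in Ioc r (8*π*r), Real.exp (-β*(t - 2*π*r)^2)
        ≤ ∫ t : ℝ, Real.exp (-β*(t - 2*π*r)^2) :=
      setIntegral_le_integral hsh (Eventually.of_forall fun x => (Real.exp_pos _).le)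
    have hval : ∫ t : ℝ, Real.exp (-β*(t - 2*π*r)^2) = Real.sqrt (π/β) := by
      rw [integral_sub_right_eq_self (fun x : ℝ => Real.exp (-β*x^2)) (2*π*r)]
      exact integral_gaussian β
    have hπβ : π/β = 32*π^3*r := by
      rw [hβdef]
      field_simp
    have hp2' : π^2 ≤ 9.9225 := by nlinarith [Real.pi_lt_d2, Real.pi_gt_three]
    have hp3' : π^3 ≤ 32 := by nlinarith [Real.pi_lt_d2, Real.pi_gt_three]
    have hs32 : Real.sqrt (π/β) ≤ 32*r := by
      rw [hπβ]
      calc Real.sqrt (32*π^3*r) ≤ Real.sqrt ((32*r)^2) :=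
            Real.sqrt_le_sqrt (by nlinarith)
        _ = 32*r := Real.sqrt_sq (by positivity)
    have hcomb : ∫ t in Ioc r (8*π*r), Real.exp (-β*(t - 2*π*r)^2) ≤ 32*r :=
      hset.trans (hval ▸ hs32)
    calc Real.exp (-r) * r⁻¹ * ∫ t in Ioc r (8*π*r), Real.exp (-β*(t - 2*π*r)^2)
        ≤ Real.exp (-r) * r⁻¹ * (32*r) := by
          apply mul_le_mul_of_nonneg_left hcomb (by positivity)
      _ = Real.exp (-r) * 32 := by
          field_simp
  have hI3 : ∫ t in Ioi (8*π*r), g3 t ≤ Real.exp (-r) * 26 := by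
    rw [hg3def, int_exp_Ioi _ _ (inv_pos.mpr (by positivity) : (0:ℝ) < (8*π)⁻¹)]
    have h1 : -(8*π)⁻¹*(8*π*r) = -r := by
      field_simp
    rw [h1]
    have hd : Real.exp (-r)/(8*π)⁻¹ = Real.exp (-r)*(8*π) := by field_simp
    rw [hd]
    apply mul_le_mul_of_nonneg_left _ (Real.exp_pos _).le
    nlinarith [Real.pi_lt_d2]
  have e1 := hp1.2.trans hI1
  have e2 := hp2.2.trans hI2
  have e3 := hp3.2.trans hI3
  have hM : 0 ≤ max (Real.log (1/r)) 0 := le_max_right _ _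
  nlinarith [Real.exp_pos (-r), mul_nonneg (Real.exp_pos (-r)).le hM, e1, e2, e3]

lemma main_bound {r : ℝ} (hr : 0 < r) :
    ∫ t in Ioi (0:ℝ), F r t ≤ 64 * Real.exp (-r) * (1 + max (Real.log (1/r)) 0) := by
  rcases le_total r 1 with h | h
  · exact bound_small hr h
  · exact bound_large h

end BesselAux

/-- Borderline case `δ = n`: `𝓑_n(y) ≤ C e^{−|y|}(1 + log⁺(1/|y|))` on `ℝⁿ∖{0}`. -/
theorem stmt8 (n : ℕ) (hn : 1 ≤ n) :
    ∃ C : ℝ, 0 < C ∧ ∀ y : EuclideanSpace ℝ (Fin n), y ≠ 0 →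
      besselKernel n n y ≤ C * Real.exp (-‖y‖) * (1 + max (Real.log (1 / ‖y‖)) 0) := by
  have hπ := Real.pi_pos
  have hn0 : (0:ℝ) < n := by exact_mod_cast Nat.pos_of_ne_zero (by omega)
  have hc : 0 < (4*π) ^ ((n:ℝ)/2) * Real.Gamma ((n:ℝ)/2) :=
    mul_pos (Real.rpow_pos_of_pos (by positivity) _)
      (Real.Gamma_pos_of_pos (by linarith))
  refine ⟨((4*π) ^ ((n:ℝ)/2) * Real.Gamma ((n:ℝ)/2))⁻¹ * 64, by positivity, fun y hy => ?_⟩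
  have hr : 0 < ‖y‖ := norm_pos_iff.mpr hy
  have hEq : ∫ t in Ioi (0:ℝ), besselIntegrand n n y t
      = ∫ t in Ioi (0:ℝ), BesselAux.F ‖y‖ t := by
    apply setIntegral_congr_fun measurableSet_Ioi
    intro t ht
    unfold besselIntegrand BesselAux.F
    have h1 : ((n:ℝ) - n)/2 - 1 = -1 := by ring
    rw [h1]
    congr 1
    rw [show (-1:ℝ) = ((-1:ℤ):ℝ) by norm_num, Real.rpow_intCast, zpow_neg_one]
  calc besselKernel n n y
      = ((4*π) ^ ((n:ℝ)/2) * Real.Gamma ((n:ℝ)/2))⁻¹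
        * ∫ t in Ioi (0:ℝ), BesselAux.F ‖y‖ t := by
        unfold besselKernel
        rw [hEq]
    _ ≤ ((4*π) ^ ((n:ℝ)/2) * Real.Gamma ((n:ℝ)/2))⁻¹
        * (64 * Real.exp (-‖y‖) * (1 + max (Real.log (1/‖y‖)) 0)) :=
        mul_le_mul_of_nonneg_left (BesselAux.main_bound hr) (inv_nonneg.mpr hc.le)
    _ = ((4*π) ^ ((n:ℝ)/2) * Real.Gamma ((n:ℝ)/2))⁻¹ * 64 * Real.exp (-‖y‖)
        * (1 + max (Real.log (1/‖y‖)) 0) := by ring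
end

section
/- Let n ≥ 1 be an integer and 0 < δ < n. Then there exist constants c₁, c₂ > 0 and a radius r ∈ (0, 1) such that for every y ∈ ℝⁿ with 0 < |y| < r, c₁ |y|^{δ−n} ≤ 𝓑_δ(y) ≤ c₂ |y|^{δ−n}. -/
set_option maxHeartbeats 1000000


open MeasureTheory
open scoped Real

section AuxBessel

open Set Real

private lemma bessel_exp_neg_div_le (k : ℕ) {u : ℝ} (hu : 0 < u) :
    Real.exp (-π / u) ≤ (k.factorial / π ^ k) * u ^ k := by
  have hπ : (0 : ℝ) < π := Real.pi_pos
  have hx : (0 : ℝ) < π / u := by positivity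
  have h1 : (π / u) ^ k / k.factorial ≤ Real.exp (π / u) :=
    Real.pow_div_factorial_le_exp _ hx.le k
  have h2 : (0 : ℝ) < (π / u) ^ k / k.factorial := by positivity
  have h3 : (Real.exp (π / u))⁻¹ ≤ ((π / u) ^ k / k.factorial)⁻¹ :=
    inv_anti₀ h2 h1
  have h4 : -π / u = -(π / u) := by ring
  rw [h4, Real.exp_neg]
  refine h3.trans_eq ?_
  rw [div_pow]
  have hfk : (0 : ℝ) < (k.factorial : ℝ) := by positivity
  field_simp

private lemma bessel_g_continuousOn (A : ℝ) :
    ContinuousOn (fun u : ℝ => Real.exp (-π / u) * u ^ (A - 1)) (Ioi 0) := by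
  intro u hu
  have hu0 : u ≠ 0 := ne_of_gt hu
  apply ContinuousAt.continuousWithinAt
  exact (Real.continuous_exp.continuousAt.comp
    ((continuousAt_const.div continuousAt_id hu0))).mul
    (Real.continuousAt_rpow_const u _ (Or.inl hu0))

private lemma bessel_g_integrable {A : ℝ} (hA : A < 0) :
    IntegrableOn (fun u : ℝ => Real.exp (-π / u) * u ^ (A - 1)) (Ioi 0) := by
  have hπ : (0 : ℝ) < π := Real.pi_pos
  have hmeas : AEStronglyMeasurable (fun u : ℝ => Real.exp (-π / u) * u ^ (A - 1))
      (volume.restrict (Ioi (0:ℝ))) :=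
    (bessel_g_continuousOn A).aestronglyMeasurable measurableSet_Ioi
  have hsplit : Ioc (0:ℝ) 1 ∪ Ioi 1 = Ioi 0 := Ioc_union_Ioi_eq_Ioi zero_le_one
  rw [← hsplit]
  apply IntegrableOn.union
  · -- on (0,1]
    set k : ℕ := ⌈-A⌉₊ + 1 with hk_def
    have hk : -A < (k : ℕ) := by
      have := Nat.le_ceil (-A)
      push_cast [hk_def]
      linarith
    have hC : (0 : ℝ) < (k.factorial : ℝ) / π ^ k := by positivity
    have hint : IntegrableOn (fun u : ℝ => ((k.factorial : ℝ) / π ^ k) * u ^ ((k : ℝ) + (A - 1)))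
        (Ioc (0:ℝ) 1) := by
      apply Integrable.const_mul
      have h1 : (-1 : ℝ) < (k : ℝ) + (A - 1) := by linarith
      have := intervalIntegral.intervalIntegrable_rpow' (a := 0) (b := 1) h1
      rw [intervalIntegrable_iff, uIoc_of_le zero_le_one] at this
      exact this
    refine Integrable.mono' hint
      (hmeas.mono_set (Ioc_subset_Ioi_self)) ?_
    · rw [ae_restrict_iff' measurableSet_Ioc]
      filter_upwards with u hu
      have hu0 : 0 < u := hu.1
      have hnn : 0 ≤ Real.exp (-π / u) * u ^ (A - 1) := by positivity
      rw [Real.norm_eq_abs, abs_of_nonneg hnn]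
      calc Real.exp (-π / u) * u ^ (A - 1)
          ≤ ((k.factorial : ℝ) / π ^ k * u ^ k) * u ^ (A - 1) := by
            apply mul_le_mul_of_nonneg_right (bessel_exp_neg_div_le k hu0) (by positivity)
        _ = ((k.factorial : ℝ) / π ^ k) * u ^ ((k : ℝ) + (A - 1)) := by
            rw [Real.rpow_add hu0, Real.rpow_natCast]; ring
  · -- on (1,∞)
    have hint : IntegrableOn (fun u : ℝ => u ^ (A - 1)) (Ioi (1:ℝ)) :=
      integrableOn_Ioi_rpow_of_lt (by linarith) one_pos
    refine Integrable.mono' hint (hmeas.mono_set (Ioi_subset_Ioi zero_le_one)) ?_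
    rw [ae_restrict_iff' measurableSet_Ioi]
    filter_upwards with u hu
    have hu0 : (0:ℝ) < u := lt_trans one_pos hu
    have hnn : 0 ≤ Real.exp (-π / u) * u ^ (A - 1) := by positivity
    rw [Real.norm_eq_abs, abs_of_nonneg hnn]
    have he : Real.exp (-π / u) ≤ 1 := by
      apply Real.exp_le_one_iff.mpr
      rw [neg_div]
      have : 0 < π / u := by positivity
      linarith
    calc Real.exp (-π / u) * u ^ (A - 1) ≤ 1 * u ^ (A - 1) :=
          mul_le_mul_of_nonneg_right he (by positivity)
      _ = u ^ (A - 1) := one_mul _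

end AuxBessel

/-- For `0 < δ < n`, two-sided asymptotics at the origin: `𝓑_δ(y) ≈ |y|^{δ−n}` near `0`. -/
theorem stmt10 (n : ℕ) (hn : 1 ≤ n) (δ : ℝ) (hδ0 : 0 < δ) (hδn : δ < n) :
    ∃ c₁ : ℝ, 0 < c₁ ∧ ∃ c₂ : ℝ, 0 < c₂ ∧ ∃ r : ℝ, 0 < r ∧ r < 1 ∧
      ∀ y : EuclideanSpace ℝ (Fin n), 0 < ‖y‖ → ‖y‖ < r →
        c₁ * ‖y‖ ^ (δ - n) ≤ besselKernel n δ y ∧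
        besselKernel n δ y ≤ c₂ * ‖y‖ ^ (δ - n) := by
  classical
  open Set Real in
  have hπ : (0 : ℝ) < π := Real.pi_pos
  set A : ℝ := (δ - n) / 2 with hAdef
  have hA : A < 0 := by
    rw [hAdef]; have : δ - (n:ℝ) < 0 := by linarith
    linarith
  set g : ℝ → ℝ := fun u => Real.exp (-π / u) * u ^ (A - 1) with hgdef
  have hg : IntegrableOn g (Set.Ioi 0) := bessel_g_integrable hA
  set C : ℝ := (4 * π) ^ (δ / 2) * Real.Gamma (δ / 2) with hCdef
  have hC : 0 < C := by
    apply mul_pos (Real.rpow_pos_of_pos (by positivity) _)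
      (Real.Gamma_pos_of_pos (by positivity))
  set c₀ : ℝ := Real.exp (-2 / (4 * π)) * (Real.exp (-π) * (2:ℝ) ^ (A - 1)) with hc₀def
  have hc₀ : 0 < c₀ := by
    apply mul_pos (Real.exp_pos _) (mul_pos (Real.exp_pos _) (Real.rpow_pos_of_pos two_pos _))
  -- lower bound for ∫ g
  have hgc : ∀ u ∈ Set.Ioc (1:ℝ) 2, c₀ ≤ g u := by
    intro u hu
    have hu0 : (0:ℝ) < u := lt_trans one_pos hu.1
    have h1 : Real.exp (-2 / (4*π)) ≤ 1 := by
      apply Real.exp_le_one_iff.mpr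
      rw [neg_div]
      have : (0:ℝ) < 2 / (4*π) := by positivity
      linarith
    have h2 : Real.exp (-π) ≤ Real.exp (-π / u) := by
      apply Real.exp_le_exp.mpr
      rw [neg_div]
      have : π / u ≤ π := by
        rw [div_le_iff₀ hu0]
        nlinarith [hu.1]
      linarith
    have h3 : (2:ℝ) ^ (A - 1) ≤ u ^ (A - 1) :=
      Real.rpow_le_rpow_of_nonpos hu0 hu.2 (by linarith)
    calc c₀ ≤ 1 * (Real.exp (-π) * (2:ℝ) ^ (A - 1)) := by
          rw [hc₀def]
          apply mul_le_mul_of_nonneg_right h1 (by positivity)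
      _ = Real.exp (-π) * (2:ℝ) ^ (A - 1) := one_mul _
      _ ≤ Real.exp (-π / u) * u ^ (A - 1) := by
          apply mul_le_mul h2 h3 (by positivity) (Real.exp_pos _).le
  have hIoc_sub : Set.Ioc (1:ℝ) 2 ⊆ Set.Ioi 0 := fun x hx => lt_trans one_pos hx.1
  have hvol : (volume (Set.Ioc (1:ℝ) 2)).toReal = 1 := by
    rw [Real.volume_Ioc]
    norm_num
  have hg_nonneg : ∀ u ∈ Set.Ioi (0:ℝ), 0 ≤ g u := by
    intro u hu
    have : (0:ℝ) < u := hu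
    positivity
  have hintg_lb : c₀ ≤ ∫ u in Set.Ioi (0:ℝ), g u := by
    have h1 : ∫ u in Set.Ioc (1:ℝ) 2, (c₀ : ℝ) ≤ ∫ u in Set.Ioc (1:ℝ) 2, g u := by
      apply setIntegral_mono_on (integrableOn_const (by simp))
        (hg.mono_set hIoc_sub) measurableSet_Ioc hgc
    have h2 : ∫ u in Set.Ioc (1:ℝ) 2, g u ≤ ∫ u in Set.Ioi (0:ℝ), g u := by
      apply setIntegral_mono_set hg
      · filter_upwards [ae_restrict_mem measurableSet_Ioi] with u hu
        exact hg_nonneg u hu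
      · exact HasSubset.Subset.eventuallyLE hIoc_sub
    have h3 : ∫ u in Set.Ioc (1:ℝ) 2, (c₀ : ℝ) = c₀ := by
      rw [setIntegral_const, smul_eq_mul, measureReal_def, hvol, one_mul]
    linarith
  set c₂ : ℝ := C⁻¹ * ∫ u in Set.Ioi (0:ℝ), g u with hc₂def
  refine ⟨C⁻¹ * c₀, mul_pos (inv_pos.mpr hC) hc₀, c₂, ?_, 1/2, by norm_num, by norm_num, ?_⟩
  · rw [hc₂def]
    have : (0:ℝ) < ∫ u in Set.Ioi (0:ℝ), g u := lt_of_lt_of_le hc₀ hintg_lb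
    exact mul_pos (inv_pos.mpr hC) this
  intro y hy0 hyr
  set ε : ℝ := ‖y‖ with hεdef
  have hε1 : ε < 1 := by linarith
  have hε2 : (0:ℝ) < ε ^ 2 := by positivity
  -- the substituted integrand
  set h : ℝ → ℝ := fun u => Real.exp (-(ε^2 * u) / (4 * π)) * Real.exp (-π / u) * u ^ (A - 1)
    with hhdef
  have hh_le_g : ∀ u ∈ Set.Ioi (0:ℝ), h u ≤ g u := by
    intro u hu
    have hu0 : (0:ℝ) < u := hu
    have he : Real.exp (-(ε^2 * u) / (4 * π)) ≤ 1 := by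
      apply Real.exp_le_one_iff.mpr
      have h1 : (0:ℝ) ≤ ε^2 * u / (4*π) := by positivity
      rw [neg_div]
      linarith
    rw [hhdef, hgdef]
    simp only
    calc Real.exp (-(ε^2 * u) / (4 * π)) * Real.exp (-π / u) * u ^ (A - 1)
        ≤ 1 * Real.exp (-π / u) * u ^ (A - 1) := by
          apply mul_le_mul_of_nonneg_right
            (mul_le_mul_of_nonneg_right he (Real.exp_pos _).le) (by positivity)
      _ = Real.exp (-π / u) * u ^ (A - 1) := by ring
  have hh_meas : AEStronglyMeasurable h (volume.restrict (Set.Ioi (0:ℝ))) := by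
    have hcont : ContinuousOn h (Set.Ioi 0) := by
      apply ContinuousOn.mul
      · apply ContinuousOn.mul
        · apply Continuous.continuousOn
          exact Real.continuous_exp.comp (by continuity)
        · intro u hu
          exact ((Real.continuous_exp.continuousAt.comp
            ((continuousAt_const.div continuousAt_id (ne_of_gt hu))))).continuousWithinAt
      · intro u hu
        exact (Real.continuousAt_rpow_const u _ (Or.inl (ne_of_gt hu))).continuousWithinAt
    exact hcont.aestronglyMeasurable measurableSet_Ioi
  have hh_nonneg : ∀ u ∈ Set.Ioi (0:ℝ), 0 ≤ h u := by
    intro u hu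
    have : (0:ℝ) < u := hu
    rw [hhdef]; positivity
  have hh_int : IntegrableOn h (Set.Ioi 0) := by
    refine Integrable.mono' hg hh_meas ?_
    rw [ae_restrict_iff' measurableSet_Ioi]
    filter_upwards with u hu
    rw [Real.norm_eq_abs, abs_of_nonneg (hh_nonneg u hu)]
    exact hh_le_g u hu
  -- lower bound on ∫ h
  have hhc : ∀ u ∈ Set.Ioc (1:ℝ) 2, c₀ ≤ h u := by
    intro u hu
    have hu0 : (0:ℝ) < u := lt_trans one_pos hu.1
    have h1 : Real.exp (-2 / (4*π)) ≤ Real.exp (-(ε^2 * u) / (4 * π)) := by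
      apply Real.exp_le_exp.mpr
      rw [neg_div, neg_div]
      have hεu : ε^2 * u ≤ 2 := by nlinarith [hu.2, sq_nonneg ε]
      have h4 : ε^2 * u / (4*π) ≤ 2 / (4*π) := by gcongr
      linarith
    have h2 : Real.exp (-π) ≤ Real.exp (-π / u) := by
      apply Real.exp_le_exp.mpr
      rw [neg_div]
      have : π / u ≤ π := by
        rw [div_le_iff₀ hu0]; nlinarith [hu.1]
      linarith
    have h3 : (2:ℝ) ^ (A - 1) ≤ u ^ (A - 1) :=
      Real.rpow_le_rpow_of_nonpos hu0 hu.2 (by linarith)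
    rw [hc₀def, hhdef]
    simp only
    calc Real.exp (-2/(4*π)) * (Real.exp (-π) * (2:ℝ) ^ (A-1))
        = Real.exp (-2/(4*π)) * Real.exp (-π) * (2:ℝ) ^ (A-1) := by ring
      _ ≤ Real.exp (-(ε^2 * u) / (4 * π)) * Real.exp (-π / u) * u ^ (A - 1) := by
          apply mul_le_mul (mul_le_mul h1 h2 (Real.exp_pos _).le (Real.exp_pos _).le)
            h3 (by positivity) (by positivity)
  have hinth_lb : c₀ ≤ ∫ u in Set.Ioi (0:ℝ), h u := by
    have h1 : ∫ u in Set.Ioc (1:ℝ) 2, (c₀ : ℝ) ≤ ∫ u in Set.Ioc (1:ℝ) 2, h u := by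
      apply setIntegral_mono_on (integrableOn_const (by simp))
        (hh_int.mono_set hIoc_sub) measurableSet_Ioc hhc
    have h2 : ∫ u in Set.Ioc (1:ℝ) 2, h u ≤ ∫ u in Set.Ioi (0:ℝ), h u := by
      apply setIntegral_mono_set hh_int
      · filter_upwards [ae_restrict_mem measurableSet_Ioi] with u hu
        exact hh_nonneg u hu
      · exact HasSubset.Subset.eventuallyLE hIoc_sub
    have h3 : ∫ u in Set.Ioc (1:ℝ) 2, (c₀ : ℝ) = c₀ := by
      rw [setIntegral_const, smul_eq_mul, measureReal_def, hvol, one_mul]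
    linarith
  have hinth_ub : ∫ u in Set.Ioi (0:ℝ), h u ≤ ∫ u in Set.Ioi (0:ℝ), g u :=
    setIntegral_mono_on hh_int hg measurableSet_Ioi hh_le_g
  -- change of variables
  have cov : ∫ t in Set.Ioi (0:ℝ), besselIntegrand n δ y t
      = ε ^ (δ - n) * ∫ u in Set.Ioi (0:ℝ), h u := by
    have step1 : ∫ t in Set.Ioi (0:ℝ), besselIntegrand n δ y t
        = ε^2 * ∫ u in Set.Ioi (0:ℝ), besselIntegrand n δ y (ε^2 * u) := by
      rw [integral_comp_mul_left_Ioi (fun t => besselIntegrand n δ y t) 0 hε2,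
        mul_zero, smul_eq_mul, ← mul_assoc, mul_inv_cancel₀ (ne_of_gt hε2), one_mul]
    have step2 : ∫ u in Set.Ioi (0:ℝ), besselIntegrand n δ y (ε^2 * u)
        = (ε^2) ^ (A - 1) * ∫ u in Set.Ioi (0:ℝ), h u := by
      rw [← integral_const_mul]
      apply setIntegral_congr_fun measurableSet_Ioi
      intro u hu
      have hu0 : (0:ℝ) < u := hu
      simp only [besselIntegrand, hhdef]
      have e1 : -π * ε ^ 2 / (ε ^ 2 * u) = -π / u := by
        field_simp
      have e2 : (ε^2 * u) ^ (A - 1) = (ε^2) ^ (A - 1) * u ^ (A - 1) :=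
        Real.mul_rpow (sq_nonneg ε) hu0.le
      rw [hεdef] at e1 e2 ⊢
      rw [e1, e2]
      ring
    have step3 : ε^2 * (ε^2) ^ (A - 1) = ε ^ (δ - n) := by
      have h1 : (ε:ℝ)^2 = ε ^ ((2:ℕ):ℝ) := (Real.rpow_natCast ε 2).symm
      rw [h1, ← Real.rpow_mul hy0.le, ← Real.rpow_add hy0]
      congr 1
      push_cast
      rw [hAdef]
      ring
    rw [step1, step2, ← mul_assoc, step3]
  have hbk : besselKernel n δ y = C⁻¹ * (ε ^ (δ - n) * ∫ u in Set.Ioi (0:ℝ), h u) := by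
    rw [besselKernel, ← hCdef, cov]
  have hεp : (0:ℝ) < ε ^ (δ - n) := Real.rpow_pos_of_pos hy0 _
  constructor
  · rw [hbk]
    calc C⁻¹ * c₀ * ε ^ (δ - n) = C⁻¹ * (ε ^ (δ - n) * c₀) := by ring
      _ ≤ C⁻¹ * (ε ^ (δ - n) * ∫ u in Set.Ioi (0:ℝ), h u) := by
          apply mul_le_mul_of_nonneg_left
            (mul_le_mul_of_nonneg_left hinth_lb hεp.le) (by positivity)
  · rw [hbk, hc₂def]
    calc C⁻¹ * (ε ^ (δ - n) * ∫ u in Set.Ioi (0:ℝ), h u)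
        ≤ C⁻¹ * (ε ^ (δ - n) * ∫ u in Set.Ioi (0:ℝ), g u) := by
          apply mul_le_mul_of_nonneg_left
            (mul_le_mul_of_nonneg_left hinth_ub hεp.le) (by positivity)
      _ = C⁻¹ * (∫ u in Set.Ioi (0:ℝ), g u) * ε ^ (δ - n) := by ring
end

section
/- Let n ≥ 1 be an integer and δ > 0. Then there exist constants c₁, c₂ > 0 and R > 0 such that for every y ∈ ℝⁿ with |y| ≥ R, c₁ |y|^{(δ−n−1)/2} e^{−|y|} ≤ 𝓑_δ(y) ≤ c₂ |y|^{(δ−n−1)/2} e^{−|y|}. -/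
open MeasureTheory
open scoped Real

namespace Stmt13Aux
open Real Set Filter

noncomputable def F (a r t : ℝ) : ℝ :=
  Real.exp (-t / (4 * π)) * Real.exp (-π * r ^ 2 / t) * t ^ (a - 1)

lemma F_nonneg {a r t : ℝ} (ht : 0 ≤ t) : 0 ≤ F a r t := by
  unfold F; positivity

lemma F_eq_aux (a r t : ℝ) : F a r t
    = Real.exp (-t / (4 * π)) * Real.exp (-(π * r ^ 2 / t)) * t ^ (a - 1) := by
  unfold F
  rw [show -π * r ^ 2 / t = -(π * r ^ 2 / t) by ring]

lemma sup_bound (p : ℝ) (hp : 0 ≤ p) {c : ℝ} (hc : 0 < c) :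
    ∃ K : ℝ, 0 < K ∧ ∀ s : ℝ, 0 ≤ s → s ^ p * Real.exp (-(c * s)) ≤ K := by
  have h := tendsto_rpow_mul_exp_neg_mul_atTop_nhds_zero p c hc
  have h2 : ∀ᶠ x in atTop, x ^ p * Real.exp (-c * x) ≤ 1 :=
    h.eventually (eventually_le_nhds one_pos)
  obtain ⟨T, hT⟩ := eventually_atTop.1 h2
  have hcont : Continuous fun s : ℝ => s ^ p * Real.exp (-(c * s)) := by
    apply Continuous.mul
    · exact continuous_iff_continuousAt.2 fun x => Real.continuousAt_rpow_const x p (Or.inr hp)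
    · exact Real.continuous_exp.comp (continuous_const.mul continuous_id).neg
  obtain ⟨C, hC⟩ := (isCompact_Icc (a := (0:ℝ)) (b := T)).exists_bound_of_continuousOn
    hcont.continuousOn
  refine ⟨max C 1, lt_of_lt_of_le one_pos (le_max_right _ _), fun s hs => ?_⟩
  rcases le_total s T with h' | h'
  · exact le_trans (le_trans (le_abs_self _) (hC s ⟨hs, h'⟩)) (le_max_left _ _)
  · have h3 := hT s h'
    rw [neg_mul] at h3
    exact le_trans h3 (le_max_right _ _)

lemma exp_div_rpow_le {q : ℝ} (hq : q ≤ 0) :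
    ∃ K : ℝ, 0 < K ∧ ∀ b t : ℝ, 0 < b → 0 < t →
      Real.exp (-(b / t)) * t ^ q ≤ K * b ^ q := by
  obtain ⟨K, hK, hKb⟩ := sup_bound (-q) (neg_nonneg.2 hq) (c := 1) one_pos
  refine ⟨K, hK, fun b t hb ht => ?_⟩
  have hu : 0 < b / t := div_pos hb ht
  have h1 : t ^ q = b ^ q * (b / t) ^ (-q) := by
    have hbt : b * (t / b) = t := by field_simp
    rw [Real.rpow_neg hu.le, ← Real.inv_rpow hu.le, inv_div,
      ← Real.mul_rpow hb.le (div_pos ht hb).le, hbt]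
  have h2 := hKb (b / t) hu.le
  rw [one_mul] at h2
  calc Real.exp (-(b / t)) * t ^ q
      = b ^ q * ((b / t) ^ (-q) * Real.exp (-(b / t))) := by rw [h1]; ring
    _ ≤ b ^ q * K := by
        exact mul_le_mul_of_nonneg_left h2 (Real.rpow_nonneg hb.le q)
    _ = K * b ^ q := mul_comm _ _

lemma contOn (a r : ℝ) : ContinuousOn (F a r) (Ioi 0) := by
  unfold F
  apply ContinuousOn.mul
  · apply ContinuousOn.mul
    · exact (Real.continuous_exp.comp (by fun_prop)).continuousOn
    · apply Real.continuous_exp.comp_continuousOn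
      exact ContinuousOn.div continuousOn_const continuousOn_id (fun t ht => ne_of_gt ht)
  · intro x hx
    exact (Real.continuousAt_rpow_const x _ (Or.inl (ne_of_gt hx))).continuousWithinAt

lemma integrableOn_F (a : ℝ) {r : ℝ} (hr : 0 < r) : IntegrableOn (F a r) (Ioi 0) := by
  have hmeas : ∀ s : Set ℝ, s ⊆ Ioi (0:ℝ) → MeasurableSet s →
      AEStronglyMeasurable (F a r) (volume.restrict s) :=
    fun s hs hms => ((contOn a r).mono hs).aestronglyMeasurable hms
  rw [← Ioc_union_Ioi_eq_Ioi (zero_le_one (α := ℝ))]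
  apply IntegrableOn.union
  · -- Ioc 0 1 : bounded by a constant
    obtain ⟨C, hC0, hC⟩ : ∃ C, 0 < C ∧ ∀ t ∈ Ioc (0:ℝ) 1, F a r t ≤ C := by
      rcases le_or_gt a 1 with ha | ha
      · obtain ⟨K, hK, hKb⟩ := exp_div_rpow_le (q := a - 1) (by linarith)
        refine ⟨K * (π * r ^ 2) ^ (a - 1), by positivity, fun t ht => ?_⟩
        rw [F_eq_aux]
        have h2 := hKb (π * r ^ 2) t (by positivity) ht.1
        have h1 : Real.exp (-t / (4 * π)) ≤ 1 := by
          rw [Real.exp_le_one_iff, neg_div, neg_nonpos]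
          exact div_nonneg ht.1.le (by positivity)
        have hnn : 0 ≤ Real.exp (-(π * r ^ 2 / t)) * t ^ (a - 1) :=
          mul_nonneg (Real.exp_pos _).le (Real.rpow_nonneg ht.1.le _)
        calc Real.exp (-t / (4 * π)) * Real.exp (-(π * r ^ 2 / t)) * t ^ (a - 1)
            = Real.exp (-t / (4 * π)) * (Real.exp (-(π * r ^ 2 / t)) * t ^ (a - 1)) := by ring
          _ ≤ 1 * (Real.exp (-(π * r ^ 2 / t)) * t ^ (a - 1)) :=
              mul_le_mul_of_nonneg_right h1 hnn
          _ = Real.exp (-(π * r ^ 2 / t)) * t ^ (a - 1) := one_mul _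
          _ ≤ K * (π * r ^ 2) ^ (a - 1) := h2
      · refine ⟨1, one_pos, fun t ht => ?_⟩
        rw [F_eq_aux]
        have h1 : Real.exp (-t / (4 * π)) ≤ 1 := by
          rw [Real.exp_le_one_iff, neg_div, neg_nonpos]
          exact div_nonneg ht.1.le (by positivity)
        have h2 : Real.exp (-(π * r ^ 2 / t)) ≤ 1 := by
          rw [Real.exp_le_one_iff, neg_nonpos]
          exact div_nonneg (by positivity) ht.1.le
        have h3 : t ^ (a - 1) ≤ 1 := Real.rpow_le_one ht.1.le ht.2 (by linarith)
        have hnn : (0:ℝ) ≤ t ^ (a - 1) := Real.rpow_nonneg ht.1.le _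
        exact mul_le_one₀ (mul_le_one₀ h1 (Real.exp_pos _).le h2) hnn h3
    apply Integrable.mono' (g := fun _ : ℝ => C)
    · exact integrableOn_const measure_Ioc_lt_top.ne
    · exact hmeas _ (fun x hx => hx.1) measurableSet_Ioc
    · filter_upwards [ae_restrict_mem measurableSet_Ioc] with t ht
      rw [Real.norm_eq_abs, abs_of_nonneg (F_nonneg ht.1.le)]
      exact hC t ht
  · -- Ioi 1
    obtain ⟨K, hK, hKb⟩ := sup_bound (max (a - 1) 0) (le_max_right _ _)
      (c := 1 / (8 * π)) (by positivity)
    apply Integrable.mono' (g := fun t : ℝ => K * Real.exp (-(1 / (8 * π)) * t))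
    · exact (exp_neg_integrableOn_Ioi 1 (by positivity)).const_mul K
    · exact hmeas _ (fun x hx => mem_Ioi.2 (lt_trans one_pos (mem_Ioi.1 hx))) measurableSet_Ioi
    · filter_upwards [ae_restrict_mem measurableSet_Ioi] with t ht
      have ht0 : (0:ℝ) < t := lt_trans one_pos ht
      rw [Real.norm_eq_abs, abs_of_nonneg (F_nonneg ht0.le), F_eq_aux]
      have e1 : Real.exp (-(π * r ^ 2 / t)) ≤ 1 := by
        rw [Real.exp_le_one_iff, neg_nonpos]
        exact div_nonneg (by positivity) ht0.le
      have e2 : t ^ (a - 1) ≤ t ^ (max (a - 1) 0) :=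
        Real.rpow_le_rpow_of_exponent_le ht.le (le_max_left _ _)
      have e3 : Real.exp (-t / (4 * π)) = Real.exp (-(1 / (8 * π)) * t) * Real.exp (-(1 / (8 * π)) * t) := by
        rw [← Real.exp_add]; congr 1; field_simp; ring
      have e4 : t ^ (max (a - 1) 0) * Real.exp (-(1 / (8 * π) * t)) ≤ K := hKb t ht0.le
      calc Real.exp (-t / (4 * π)) * Real.exp (-(π * r ^ 2 / t)) * t ^ (a - 1)
          ≤ Real.exp (-t / (4 * π)) * 1 * t ^ (max (a - 1) 0) := by
            have h0 := (Real.exp_pos (-t / (4 * π))).le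
            apply mul_le_mul (mul_le_mul_of_nonneg_left e1 h0) e2
              (Real.rpow_nonneg ht0.le _) (by rw [mul_one]; exact h0)
        _ = Real.exp (-(1 / (8 * π)) * t) * (t ^ (max (a - 1) 0) * Real.exp (-(1 / (8 * π) * t))) := by
            rw [e3]; ring_nf
        _ ≤ Real.exp (-(1 / (8 * π)) * t) * K :=
            mul_le_mul_of_nonneg_left e4 (Real.exp_pos _).le
        _ = K * Real.exp (-(1 / (8 * π)) * t) := mul_comm _ _

lemma F_eq (a r : ℝ) {t : ℝ} (ht : 0 < t) :
    F a r t = Real.exp (-r) * Real.exp (-((t - 2 * π * r) ^ 2 / (4 * π * t))) * t ^ (a - 1) := by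
  unfold F
  congr 1
  rw [← Real.exp_add, ← Real.exp_add]
  congr 1
  have hπ : (0:ℝ) < π := Real.pi_pos
  field_simp
  ring

lemma rpow_bounds {p c d : ℝ} (hc : 0 < c) (hd : 0 < d) {r t : ℝ} (hr : 0 < r)
    (h1 : c * r ≤ t) (h2 : t ≤ d * r) :
    min (c ^ p) (d ^ p) * r ^ p ≤ t ^ p ∧ t ^ p ≤ max (c ^ p) (d ^ p) * r ^ p := by
  have ht : 0 < t := lt_of_lt_of_le (by positivity) h1
  rcases le_or_gt 0 p with hp | hp
  · constructor
    · calc min (c ^ p) (d ^ p) * r ^ p ≤ c ^ p * r ^ p :=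
          mul_le_mul_of_nonneg_right (min_le_left _ _) (Real.rpow_nonneg hr.le _)
        _ = (c * r) ^ p := (Real.mul_rpow hc.le hr.le).symm
        _ ≤ t ^ p := Real.rpow_le_rpow (by positivity) h1 hp
    · calc t ^ p ≤ (d * r) ^ p := Real.rpow_le_rpow ht.le h2 hp
        _ = d ^ p * r ^ p := Real.mul_rpow hd.le hr.le
        _ ≤ max (c ^ p) (d ^ p) * r ^ p :=
          mul_le_mul_of_nonneg_right (le_max_right _ _) (Real.rpow_nonneg hr.le _)
  · constructor
    · calc min (c ^ p) (d ^ p) * r ^ p ≤ d ^ p * r ^ p :=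
          mul_le_mul_of_nonneg_right (min_le_right _ _) (Real.rpow_nonneg hr.le _)
        _ = (d * r) ^ p := (Real.mul_rpow hd.le hr.le).symm
        _ ≤ t ^ p := Real.rpow_le_rpow_of_nonpos ht h2 hp.le
    · calc t ^ p ≤ (c * r) ^ p := Real.rpow_le_rpow_of_nonpos (by positivity) h1 hp.le
        _ = c ^ p * r ^ p := Real.mul_rpow hc.le hr.le
        _ ≤ max (c ^ p) (d ^ p) * r ^ p :=
          mul_le_mul_of_nonneg_right (le_max_left _ _) (Real.rpow_nonneg hr.le _)

lemma lower (a : ℝ) : ∃ c : ℝ, 0 < c ∧ ∀ r : ℝ, 1 ≤ r →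
    c * r ^ (a - 1 / 2) * Real.exp (-r) ≤ ∫ t in Ioi (0:ℝ), F a r t := by
  have hπ : (0:ℝ) < π := Real.pi_pos
  set m : ℝ := min ((1:ℝ) ^ (a - 1)) ((8:ℝ) ^ (a - 1)) with hm
  have hm0 : 0 < m := lt_min (by positivity) (by positivity)
  refine ⟨Real.exp (-1) * m, by positivity, fun r hr => ?_⟩
  have hr0 : (0:ℝ) < r := lt_of_lt_of_le one_pos hr
  have hsq : Real.sqrt r ≤ r := by
    nlinarith [Real.sq_sqrt hr0.le, Real.sqrt_nonneg r, Real.sqrt_le_sqrt hr,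
      Real.sqrt_one]
  have hsq0 : 0 < Real.sqrt r := Real.sqrt_pos.2 hr0
  set S : Set ℝ := Icc (2 * π * r) (2 * π * r + Real.sqrt r) with hS
  have hsub : S ⊆ Ioi (0:ℝ) := fun t htS => lt_of_lt_of_le (by positivity) htS.1
  have key : ∀ t ∈ S, Real.exp (-r) * Real.exp (-1) * (m * r ^ (a - 1)) ≤ F a r t := by
    intro t htS
    have ht0 : 0 < t := hsub htS
    rw [F_eq a r ht0]
    have hQ : (t - 2 * π * r) ^ 2 / (4 * π * t) ≤ 1 := by
      have h1 : (t - 2 * π * r) ^ 2 ≤ r := by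
        have := htS.1; have := htS.2
        nlinarith [Real.sq_sqrt hr0.le, Real.sqrt_nonneg r]
      have hπ2 : (9:ℝ) ≤ π ^ 2 := by nlinarith [Real.pi_gt_three]
      have h2 : 8 * π ^ 2 * r ≤ 4 * π * t := by nlinarith [htS.1]
      rw [div_le_one (by positivity)]
      nlinarith [hr0.le]
    have hexp : Real.exp (-1) ≤ Real.exp (-((t - 2 * π * r) ^ 2 / (4 * π * t))) :=
      Real.exp_le_exp.2 (by linarith)
    have htlo : 1 * r ≤ t := by nlinarith [htS.1, Real.pi_gt_three]
    have hthi : t ≤ 8 * r := by nlinarith [htS.2, Real.pi_lt_d2, hsq]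
    have hpow := (rpow_bounds (p := a - 1) one_pos (by norm_num : (0:ℝ) < 8) hr0 htlo hthi).1
    calc Real.exp (-r) * Real.exp (-1) * (m * r ^ (a - 1))
        ≤ Real.exp (-r) * Real.exp (-((t - 2 * π * r) ^ 2 / (4 * π * t))) * (m * r ^ (a - 1)) :=
          mul_le_mul_of_nonneg_right (mul_le_mul_of_nonneg_left hexp (Real.exp_pos _).le)
            (mul_nonneg hm0.le (Real.rpow_nonneg hr0.le _))
      _ ≤ Real.exp (-r) * Real.exp (-((t - 2 * π * r) ^ 2 / (4 * π * t))) * t ^ (a - 1) := by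
          apply mul_le_mul_of_nonneg_left _ (by positivity)
          rw [hm]
          exact hpow
  have hIS : IntegrableOn (F a r) S := (integrableOn_F a hr0).mono_set hsub
  have step1 : (Real.exp (-r) * Real.exp (-1) * (m * r ^ (a - 1))) * Real.sqrt r
      ≤ ∫ t in S, F a r t := by
    have := setIntegral_ge_of_const_le (μ := volume) (s := S)
      (c := Real.exp (-r) * Real.exp (-1) * (m * r ^ (a - 1))) measurableSet_Icc
      (by rw [hS, Real.volume_Icc]; exact ENNReal.ofReal_ne_top) key hIS
    rw [Real.volume_real_Icc, max_eq_left (by linarith [hsq0.le] : (0:ℝ) ≤ 2 * π * r + Real.sqrt r - 2 * π * r), show 2 * π * r + Real.sqrt r - 2 * π * r = Real.sqrt r by ring, smul_eq_mul] at this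
    rw [hS]; linarith
  have step2 : ∫ t in S, F a r t ≤ ∫ t in Ioi (0:ℝ), F a r t := by
    apply setIntegral_mono_set (integrableOn_F a hr0)
    · filter_upwards [ae_restrict_mem measurableSet_Ioi] with t ht
      exact F_nonneg (le_of_lt ht)
    · exact HasSubset.Subset.eventuallyLE hsub
  calc Real.exp (-1) * m * r ^ (a - 1 / 2) * Real.exp (-r)
      = (Real.exp (-r) * Real.exp (-1) * (m * r ^ (a - 1))) * Real.sqrt r := by
        rw [Real.sqrt_eq_rpow, show a - 1 / 2 = (a - 1) + 1 / 2 by ring,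
          Real.rpow_add hr0]
        ring
    _ ≤ ∫ t in S, F a r t := step1
    _ ≤ ∫ t in Ioi (0:ℝ), F a r t := step2

lemma int_exp_Ioi {b : ℝ} (c : ℝ) (hb : 0 < b) :
    ∫ t in Ioi c, Real.exp (-(b * t)) = Real.exp (-(b * c)) / b := by
  have hderiv : ∀ t ∈ Ioi c, HasDerivAt (fun t => -(Real.exp (-(b * t)) / b))
      (Real.exp (-(b * t))) t := by
    intro t _
    have h1 : HasDerivAt (fun x : ℝ => -(b * x)) (-b) t := by
      simpa using ((hasDerivAt_id t).const_mul (-b))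
    have h2 : HasDerivAt (fun t => -(Real.exp (-(b * t)) / b)) (-(Real.exp (-(b * t)) * -b / b)) t :=
      (h1.exp.div_const b).neg
    convert h2 using 1
    field_simp
  have hint : IntegrableOn (fun t => Real.exp (-(b * t))) (Ioi c) := by
    simpa [neg_mul] using exp_neg_integrableOn_Ioi c hb
  have htend : Tendsto (fun t => -(Real.exp (-(b * t)) / b)) atTop (nhds 0) := by
    have h1 : Tendsto (fun t : ℝ => b * t) atTop atTop :=
      Tendsto.const_mul_atTop hb tendsto_id
    have h2 := (Real.tendsto_exp_neg_atTop_nhds_zero.comp h1).div_const b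
    simpa using h2.neg
  have hcont : ContinuousWithinAt (fun t => -(Real.exp (-(b * t)) / b)) (Ici c) c := by
    apply Continuous.continuousWithinAt
    fun_prop
  have := integral_Ioi_of_hasDerivAt_of_tendsto hcont hderiv hint htend
  rw [this]
  ring

lemma add_rpow_le {p : ℝ} (hp : 0 ≤ p) {x y : ℝ} (hx : 0 ≤ x) (hy : 0 ≤ y) :
    (x + y) ^ p ≤ 2 ^ p * (x ^ p + y ^ p) := by
  have h1 : x + y ≤ 2 * max x y := by
    rcases le_total x y with h | h
    · rw [max_eq_right h]; linarith
    · rw [max_eq_left h]; linarith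
  calc (x + y) ^ p ≤ (2 * max x y) ^ p :=
        Real.rpow_le_rpow (by positivity) h1 hp
    _ = 2 ^ p * (max x y) ^ p :=
        Real.mul_rpow (by norm_num) (le_max_iff.2 (Or.inl hx))
    _ ≤ 2 ^ p * (x ^ p + y ^ p) := by
        apply mul_le_mul_of_nonneg_left _ (by positivity)
        rcases le_total x y with h | h
        · rw [max_eq_right h]; nlinarith [Real.rpow_nonneg hx p]
        · rw [max_eq_left h]; nlinarith [Real.rpow_nonneg hy p]

lemma eventually_le_rpow (c p b : ℝ) :
    ∀ᶠ r in atTop, c * (r ^ p * Real.exp (-(1/2) * r)) ≤ r ^ b := by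
  have h1 := (tendsto_rpow_mul_exp_neg_mul_atTop_nhds_zero (p - b) (1/2)
    (by norm_num)).const_mul c
  rw [mul_zero] at h1
  have h2 := h1.eventually (eventually_le_nhds one_pos)
  filter_upwards [h2, eventually_ge_atTop (1:ℝ)] with r hr2 hr1
  have hr0 : (0:ℝ) < r := lt_of_lt_of_le one_pos hr1
  have hsplit : r ^ (p - b) * r ^ b = r ^ p := by
    rw [← Real.rpow_add hr0]; norm_num
  have key : c * (r ^ p * Real.exp (-(1/2) * r))
      = (c * (r ^ (p - b) * Real.exp (-(1/2) * r))) * r ^ b := by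
    rw [← hsplit]; ring
  rw [key]
  calc (c * (r ^ (p - b) * Real.exp (-(1/2) * r))) * r ^ b ≤ 1 * r ^ b :=
        mul_le_mul_of_nonneg_right hr2 (Real.rpow_nonneg hr0.le b)
    _ = r ^ b := one_mul _

lemma exp2_le_one {r t : ℝ} (hr : 0 ≤ r) (ht : 0 < t) :
    Real.exp (-(π * r ^ 2 / t)) ≤ 1 := by
  rw [Real.exp_le_one_iff, neg_nonpos]
  exact div_nonneg (by positivity) ht.le

lemma one_le_rpow_aux {r p : ℝ} (hr : 1 ≤ r) (hp : 0 ≤ p) : (1:ℝ) ≤ r ^ p := by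
  have := Real.rpow_le_rpow_of_exponent_le hr hp
  rwa [Real.rpow_zero] at this

lemma upper3 (a : ℝ) : ∃ C : ℝ, 0 < C ∧ ∀ r : ℝ, 1 ≤ r →
    ∫ t in Ioi (4 * π * r), F a r t ≤ C * (r ^ (a - 1) * Real.exp (-r)) := by
  have hπ := Real.pi_pos
  rcases le_or_gt a 1 with ha | ha
  · refine ⟨4 * π * (4 * π) ^ (a - 1), by positivity, fun r hr => ?_⟩
    have hr0 : (0:ℝ) < r := by linarith
    have hc : (0:ℝ) < 4 * π * r := by positivity
    have hpt : ∀ t ∈ Ioi (4 * π * r), F a r t ≤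
        ((4 * π) ^ (a - 1) * r ^ (a - 1)) * Real.exp (-(1 / (4 * π) * t)) := by
      intro t ht
      have ht0 : (0:ℝ) < t := lt_trans hc ht
      rw [F_eq_aux]
      have e1 := exp2_le_one hr0.le ht0
      have e2 : t ^ (a - 1) ≤ (4 * π * r) ^ (a - 1) :=
        Real.rpow_le_rpow_of_nonpos hc (le_of_lt ht) (by linarith)
      have e3 : (4 * π * r) ^ (a - 1) = (4 * π) ^ (a - 1) * r ^ (a - 1) :=
        Real.mul_rpow (by positivity) hr0.le
      have e4 : -t / (4 * π) = -(1 / (4 * π) * t) := by ring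
      calc Real.exp (-t / (4 * π)) * Real.exp (-(π * r ^ 2 / t)) * t ^ (a - 1)
          ≤ Real.exp (-t / (4 * π)) * 1 * ((4 * π * r) ^ (a - 1)) :=
            mul_le_mul (mul_le_mul_of_nonneg_left e1 (Real.exp_pos _).le) e2
              (Real.rpow_nonneg ht0.le _) (by rw [mul_one]; exact (Real.exp_pos _).le)
        _ = ((4 * π) ^ (a - 1) * r ^ (a - 1)) * Real.exp (-(1 / (4 * π) * t)) := by
            rw [e3, e4]; ring
    have hint2 : IntegrableOn (fun t => Real.exp (-(1 / (4 * π) * t))) (Ioi (4 * π * r)) := by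
      simpa [neg_mul] using exp_neg_integrableOn_Ioi (4 * π * r) (show (0:ℝ) < 1 / (4*π) by positivity)
    calc ∫ t in Ioi (4 * π * r), F a r t
        ≤ ∫ t in Ioi (4 * π * r), ((4 * π) ^ (a - 1) * r ^ (a - 1)) * Real.exp (-(1 / (4 * π) * t)) :=
          setIntegral_mono_on
            ((integrableOn_F a hr0).mono_set (fun x hx => lt_trans hc hx))
            (hint2.const_mul _) measurableSet_Ioi hpt
      _ = ((4 * π) ^ (a - 1) * r ^ (a - 1)) * ∫ t in Ioi (4 * π * r), Real.exp (-(1 / (4 * π) * t)) :=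
          integral_const_mul _ _
      _ = ((4 * π) ^ (a - 1) * r ^ (a - 1)) * (Real.exp (-r) * (4 * π)) := by
          rw [int_exp_Ioi _ (show (0:ℝ) < 1 / (4*π) by positivity)]
          congr 1
          rw [show -(1 / (4 * π) * (4 * π * r)) = -r by field_simp]
          field_simp
      _ = 4 * π * (4 * π) ^ (a - 1) * (r ^ (a - 1) * Real.exp (-r)) := by ring
  · obtain ⟨K, hK, hKb⟩ := sup_bound (a - 1) (by linarith) (c := 1/(8*π)) (by positivity)
    refine ⟨8 * π * (2 ^ (a - 1) * (K + (4 * π) ^ (a - 1))), by positivity, fun r hr => ?_⟩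
    have hr0 : (0:ℝ) < r := by linarith
    have hc : (0:ℝ) < 4 * π * r := by positivity
    set D : ℝ := Real.exp (-(r/2)) * (2 ^ (a - 1) * (K + (4 * π * r) ^ (a - 1))) with hD
    have hD0 : 0 ≤ D := by positivity
    have hpt : ∀ t ∈ Ioi (4 * π * r), F a r t ≤ D * Real.exp (-(1 / (8 * π) * t)) := by
      intro t ht
      have ht' : 4 * π * r < t := ht
      have ht0 : (0:ℝ) < t := lt_trans hc ht'
      have hs0 : (0:ℝ) ≤ t - 4 * π * r := by linarith
      rw [F_eq_aux]
      have e1 := exp2_le_one hr0.le ht0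
      have e2 : t ^ (a - 1) ≤ 2 ^ (a - 1) * ((t - 4 * π * r) ^ (a - 1) + (4 * π * r) ^ (a - 1)) := by
        have := add_rpow_le (show (0:ℝ) ≤ a - 1 by linarith) hs0 hc.le
        rwa [sub_add_cancel] at this
      have e3 : Real.exp (-t / (4 * π)) =
          Real.exp (-(r/2)) * Real.exp (-(1/(8*π)) * (t - 4 * π * r)) * Real.exp (-(1 / (8 * π) * t)) := by
        rw [← Real.exp_add, ← Real.exp_add]
        congr 1
        field_simp
        ring
      have e5 : (t - 4 * π * r) ^ (a - 1) * Real.exp (-(1/(8*π)) * (t - 4 * π * r)) ≤ K := by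
        have := hKb (t - 4 * π * r) hs0
        rwa [show -(1/(8*π) * (t - 4*π*r)) = -(1/(8*π)) * (t - 4*π*r) by ring] at this
      have e7 : Real.exp (-(1/(8*π)) * (t - 4 * π * r)) *
          (2 ^ (a - 1) * ((t - 4 * π * r) ^ (a - 1) + (4 * π * r) ^ (a - 1)))
          ≤ 2 ^ (a - 1) * (K + (4 * π * r) ^ (a - 1)) := by
        have hx := Real.rpow_nonneg hs0 (a - 1)
        have hy := Real.rpow_nonneg hc.le (a - 1)
        have hex := (Real.exp_pos (-(1/(8*π)) * (t - 4 * π * r))).le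
        have e6 : Real.exp (-(1/(8*π)) * (t - 4 * π * r)) ≤ 1 := by
          rw [Real.exp_le_one_iff]
          have : (0:ℝ) ≤ 1/(8*π) * (t - 4*π*r) := by positivity
          linarith
        have t1 : Real.exp (-(1/(8*π)) * (t - 4 * π * r)) * (t - 4 * π * r) ^ (a - 1) ≤ K := by
          rw [mul_comm]; exact e5
        have t2 : Real.exp (-(1/(8*π)) * (t - 4 * π * r)) * (4 * π * r) ^ (a - 1)
            ≤ (4 * π * r) ^ (a - 1) := by nlinarith
        have h2p : (0:ℝ) ≤ 2 ^ (a - 1) := Real.rpow_nonneg (by norm_num) _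
        nlinarith
      calc Real.exp (-t / (4 * π)) * Real.exp (-(π * r ^ 2 / t)) * t ^ (a - 1)
          ≤ Real.exp (-t / (4 * π)) * 1 * (2 ^ (a - 1) * ((t - 4 * π * r) ^ (a - 1) + (4 * π * r) ^ (a - 1))) :=
            mul_le_mul (mul_le_mul_of_nonneg_left e1 (Real.exp_pos _).le) e2
              (Real.rpow_nonneg ht0.le _) (by rw [mul_one]; exact (Real.exp_pos _).le)
        _ = Real.exp (-(r/2)) * (Real.exp (-(1/(8*π)) * (t - 4 * π * r)) *
              (2 ^ (a - 1) * ((t - 4 * π * r) ^ (a - 1) + (4 * π * r) ^ (a - 1)))) *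
              Real.exp (-(1 / (8 * π) * t)) := by
            rw [e3]; ring
        _ ≤ Real.exp (-(r/2)) * (2 ^ (a - 1) * (K + (4 * π * r) ^ (a - 1))) *
              Real.exp (-(1 / (8 * π) * t)) := by
            apply mul_le_mul_of_nonneg_right _ (Real.exp_pos _).le
            exact mul_le_mul_of_nonneg_left e7 (Real.exp_pos _).le
        _ = D * Real.exp (-(1 / (8 * π) * t)) := by rw [hD]
    have hint2 : IntegrableOn (fun t => Real.exp (-(1 / (8 * π) * t))) (Ioi (4 * π * r)) := by
      simpa [neg_mul] using exp_neg_integrableOn_Ioi (4 * π * r) (show (0:ℝ) < 1 / (8*π) by positivity)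
    have hrp1 : (1:ℝ) ≤ r ^ (a - 1) := one_le_rpow_aux hr (by linarith)
    have hmulr : (4 * π * r) ^ (a - 1) = (4 * π) ^ (a - 1) * r ^ (a - 1) :=
      Real.mul_rpow (by positivity) hr0.le
    have h2p : (0:ℝ) < 2 ^ (a - 1) := Real.rpow_pos_of_pos (by norm_num) _
    have h4p : (0:ℝ) ≤ (4 * π) ^ (a - 1) := Real.rpow_nonneg (by positivity) _
    calc ∫ t in Ioi (4 * π * r), F a r t
        ≤ ∫ t in Ioi (4 * π * r), D * Real.exp (-(1 / (8 * π) * t)) :=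
          setIntegral_mono_on
            ((integrableOn_F a hr0).mono_set (fun x hx => lt_trans hc hx))
            (hint2.const_mul _) measurableSet_Ioi hpt
      _ = D * ∫ t in Ioi (4 * π * r), Real.exp (-(1 / (8 * π) * t)) := integral_const_mul _ _
      _ = D * (Real.exp (-(r/2)) * (8 * π)) := by
          rw [int_exp_Ioi _ (show (0:ℝ) < 1 / (8*π) by positivity)]
          congr 1
          rw [show -(1 / (8 * π) * (4 * π * r)) = -(r/2) by field_simp; ring]
          field_simp
      _ = 8 * π * (2 ^ (a - 1) * (K + (4 * π * r) ^ (a - 1))) * Real.exp (-r) := by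
          rw [hD, show Real.exp (-(r/2)) * (2 ^ (a - 1) * (K + (4 * π * r) ^ (a - 1))) *
            (Real.exp (-(r/2)) * (8 * π)) = Real.exp (-(r/2)) * Real.exp (-(r/2)) *
            (8 * π * (2 ^ (a - 1) * (K + (4 * π * r) ^ (a - 1)))) by ring,
            ← Real.exp_add, show -(r/2) + -(r/2) = -r by ring]
          ring
      _ ≤ 8 * π * (2 ^ (a - 1) * (K + (4 * π) ^ (a - 1))) * (r ^ (a - 1) * Real.exp (-r)) := by
          have hexr := (Real.exp_pos (-r)).le
          rw [hmulr]
          have key : K + (4 * π) ^ (a - 1) * r ^ (a - 1) ≤ (K + (4 * π) ^ (a - 1)) * r ^ (a - 1) := by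
            nlinarith
          have key2 := mul_le_mul_of_nonneg_right
            (mul_le_mul_of_nonneg_left key (by positivity : (0:ℝ) ≤ 8 * π * 2 ^ (a - 1))) hexr
          nlinarith [key2]

lemma upper1 (a : ℝ) : ∃ C : ℝ, 0 < C ∧ ∀ r : ℝ, 1 ≤ r →
    ∫ t in Ioc (π * r / 2) (4 * π * r), F a r t ≤ C * (r ^ (a - 1/2) * Real.exp (-r)) := by
  have hπ := Real.pi_pos
  set M : ℝ := max ((π/2) ^ (a-1)) ((4*π) ^ (a-1)) with hM
  have hM0 : 0 < M := lt_max_iff.2 (Or.inl (Real.rpow_pos_of_pos (by positivity) _))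
  refine ⟨M * Real.sqrt (16 * π ^ 3), by positivity, fun r hr => ?_⟩
  have hr0 : (0:ℝ) < r := by linarith
  set b : ℝ := 1 / (16 * π^2 * r) with hb
  have hb0 : 0 < b := by positivity
  have hpt : ∀ t ∈ Ioc (π*r/2) (4*π*r), F a r t ≤
      (Real.exp (-r) * (M * r ^ (a-1))) * Real.exp (-b * (t - 2*π*r)^2) := by
    intro t ht
    have ht0 : (0:ℝ) < t := lt_trans (by positivity) ht.1
    rw [F_eq a r ht0]
    have hQ : b * (t - 2*π*r)^2 ≤ (t - 2*π*r)^2 / (4*π*t) := by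
      rw [hb, show 1 / (16*π^2*r) * (t - 2*π*r)^2 = (t-2*π*r)^2 / (16*π^2*r) by ring,
        div_le_div_iff₀ (by positivity) (by positivity)]
      have h4 : 4*π*t ≤ 16*π^2*r := by
        nlinarith [mul_le_mul_of_nonneg_left ht.2 (le_of_lt (by positivity : (0:ℝ) < 4*π))]
      nlinarith [mul_nonneg (sq_nonneg (t - 2*π*r)) (sub_nonneg.2 h4)]
    have hexp : Real.exp (-((t - 2*π*r)^2 / (4*π*t))) ≤ Real.exp (-b * (t - 2*π*r)^2) :=
      Real.exp_le_exp.2 (by linarith)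
    have hpow : t ^ (a-1) ≤ M * r ^ (a-1) := by
      have h1 : (π/2) * r ≤ t := by linarith [ht.1]
      have h2 : t ≤ (4*π) * r := by linarith [ht.2]
      exact (rpow_bounds (p := a-1) (by positivity) (by positivity) hr0 h1 h2).2
    calc Real.exp (-r) * Real.exp (-((t - 2 * π * r) ^ 2 / (4 * π * t))) * t ^ (a - 1)
        ≤ Real.exp (-r) * Real.exp (-b * (t - 2*π*r)^2) * (M * r ^ (a-1)) := by
          apply mul_le_mul (mul_le_mul_of_nonneg_left hexp (Real.exp_pos _).le) hpow
            (Real.rpow_nonneg ht0.le _)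
          positivity
      _ = (Real.exp (-r) * (M * r ^ (a-1))) * Real.exp (-b * (t - 2*π*r)^2) := by ring
  have hgauss : Integrable (fun t : ℝ => Real.exp (-b * (t - 2*π*r)^2)) :=
    (integrable_exp_neg_mul_sq hb0).comp_sub_right (2*π*r)
  calc ∫ t in Ioc (π * r / 2) (4 * π * r), F a r t
      ≤ ∫ t in Ioc (π * r / 2) (4 * π * r),
          (Real.exp (-r) * (M * r ^ (a-1))) * Real.exp (-b * (t - 2*π*r)^2) :=
        setIntegral_mono_on
          ((integrableOn_F a hr0).mono_set (fun x hx => lt_trans (by positivity) hx.1))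
          (hgauss.integrableOn.const_mul _) measurableSet_Ioc hpt
    _ = (Real.exp (-r) * (M * r ^ (a-1))) * ∫ t in Ioc (π * r / 2) (4 * π * r),
          Real.exp (-b * (t - 2*π*r)^2) := integral_const_mul _ _
    _ ≤ (Real.exp (-r) * (M * r ^ (a-1))) * ∫ t : ℝ, Real.exp (-b * (t - 2*π*r)^2) := by
        apply mul_le_mul_of_nonneg_left _ (by positivity)
        exact setIntegral_le_integral hgauss (Filter.Eventually.of_forall fun x => (Real.exp_pos _).le)
    _ = (Real.exp (-r) * (M * r ^ (a-1))) * Real.sqrt (π / b) := by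
        rw [integral_sub_right_eq_self (fun x => Real.exp (-b * x^2)) (2*π*r), integral_gaussian]
    _ = M * Real.sqrt (16 * π ^ 3) * (r ^ (a - 1/2) * Real.exp (-r)) := by
        rw [show π / b = (16 * π^3) * r by rw [hb]; field_simp,
          Real.sqrt_mul (by positivity) r, Real.sqrt_eq_rpow r,
          show a - 1/2 = (a-1) + 1/2 by ring, Real.rpow_add hr0]
        ring

lemma upper2_pt (a : ℝ) : ∃ c3 : ℝ, 0 < c3 ∧ ∃ p : ℝ, ∀ r : ℝ, 1 ≤ r →
    ∀ t ∈ Ioc (0:ℝ) (π*r/2),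
    F a r t ≤ Real.exp (-r) * (c3 * r ^ p * Real.exp (-(1/2) * r)) := by
  have hπ := Real.pi_pos
  have main : ∀ r : ℝ, 1 ≤ r → ∀ t ∈ Ioc (0:ℝ) (π*r/2), ∀ X : ℝ, 0 ≤ X →
      Real.exp (-(π * r ^ 2 / (4*t))) * t ^ (a-1) ≤ X →
      F a r t ≤ Real.exp (-r) * (X * Real.exp (-(1/2) * r)) := by
    intro r hr t ht X hX hXle
    have hr0 : (0:ℝ) < r := by linarith
    have ht0 : (0:ℝ) < t := ht.1
    rw [F_eq_aux]
    have esplit : Real.exp (-(π * r ^ 2 / t)) = Real.exp (-(π * r ^ 2 / (2*t))) *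
        Real.exp (-(π * r ^ 2 / (4*t))) * Real.exp (-(π * r ^ 2 / (4*t))) := by
      rw [← Real.exp_add, ← Real.exp_add]
      congr 1
      field_simp
      ring
    have e1 : Real.exp (-(π * r ^ 2 / (2*t))) ≤ Real.exp (-r) := by
      apply Real.exp_le_exp.2
      rw [neg_le_neg_iff, le_div_iff₀ (by positivity)]
      nlinarith [ht.2]
    have e2 : Real.exp (-(π * r ^ 2 / (4*t))) ≤ Real.exp (-(1/2) * r) := by
      apply Real.exp_le_exp.2
      rw [show -(1/2) * r = -(r/2) by ring, neg_le_neg_iff, le_div_iff₀ (by positivity)]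
      nlinarith [ht.2]
    have hexp1 : Real.exp (-t / (4*π)) ≤ 1 := by
      rw [Real.exp_le_one_iff, neg_div, neg_nonpos]
      exact div_nonneg ht0.le (by positivity)
    have hnn1 : (0:ℝ) ≤ Real.exp (-(π * r ^ 2 / (4*t))) * t ^ (a-1) :=
      mul_nonneg (Real.exp_pos _).le (Real.rpow_nonneg ht0.le _)
    calc Real.exp (-t / (4 * π)) * Real.exp (-(π * r ^ 2 / t)) * t ^ (a - 1)
        = (Real.exp (-(π * r ^ 2 / (2*t))) * Real.exp (-(π * r ^ 2 / (4*t)))) *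
            (Real.exp (-(π * r ^ 2 / (4*t))) * t ^ (a-1)) * Real.exp (-t / (4*π)) := by
          rw [esplit]; ring
      _ ≤ (Real.exp (-r) * Real.exp (-(1/2) * r)) * X * 1 := by
          apply mul_le_mul _ hexp1 (Real.exp_pos _).le _
          · exact mul_le_mul (mul_le_mul e1 e2 (Real.exp_pos _).le (Real.exp_pos _).le)
              hXle hnn1 (by positivity)
          · positivity
      _ = Real.exp (-r) * (X * Real.exp (-(1/2) * r)) := by ring
  rcases le_or_gt a 1 with ha | ha
  · obtain ⟨K, hK, hKb⟩ := exp_div_rpow_le (q := a - 1) (by linarith)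
    refine ⟨K * (π/4) ^ (a-1), by positivity, 2*(a-1), fun r hr t ht => ?_⟩
    have hr0 : (0:ℝ) < r := by linarith
    apply main r hr t ht _ (mul_nonneg (by positivity) (Real.rpow_nonneg hr0.le _))
    have h3 := hKb (π * r^2 / 4) t (by positivity) ht.1
    rw [show -(π * r^2 / 4 / t) = -(π * r ^ 2 / (4*t)) by ring] at h3
    calc Real.exp (-(π * r ^ 2 / (4*t))) * t ^ (a-1) ≤ K * (π * r^2 / 4) ^ (a-1) := h3
      _ = K * (π/4) ^ (a-1) * r ^ (2*(a-1)) := by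
          rw [show (π * r^2 / 4 : ℝ) = (π/4) * r^2 by ring,
            Real.mul_rpow (by positivity) (by positivity),
            ← Real.rpow_natCast r 2, ← Real.rpow_mul hr0.le]
          push_cast
          ring
  · refine ⟨(π/2) ^ (a-1), Real.rpow_pos_of_pos (by positivity) _, a - 1, fun r hr t ht => ?_⟩
    have hr0 : (0:ℝ) < r := by linarith
    have ht0 : (0:ℝ) < t := ht.1
    apply main r hr t ht _
      (mul_nonneg (Real.rpow_nonneg (by positivity) _) (Real.rpow_nonneg hr0.le _))
    have hexpB : Real.exp (-(π * r ^ 2 / (4*t))) ≤ 1 := by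
      rw [Real.exp_le_one_iff, neg_nonpos]
      positivity
    have hpow : t ^ (a-1) ≤ (π/2) ^ (a-1) * r ^ (a-1) := by
      rw [← Real.mul_rpow (by positivity) hr0.le]
      exact Real.rpow_le_rpow ht0.le (by linarith [ht.2]) (by linarith)
    calc Real.exp (-(π * r ^ 2 / (4*t))) * t ^ (a-1)
        ≤ 1 * ((π/2) ^ (a-1) * r ^ (a-1)) :=
          mul_le_mul hexpB hpow (Real.rpow_nonneg ht0.le _) one_pos.le
      _ = (π/2) ^ (a-1) * r ^ (a-1) := one_mul _

lemma upper2 (a : ℝ) : ∀ᶠ r in atTop, ∫ t in Ioc (0:ℝ) (π * r / 2), F a r t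
    ≤ Real.exp (-r) * r ^ (a - 1/2) := by
  have hπ := Real.pi_pos
  obtain ⟨c3, hc3, p, hpt⟩ := upper2_pt a
  filter_upwards [eventually_le_rpow (π/2 * c3) (p+1) (a - 1/2), eventually_ge_atTop (1:ℝ)]
    with r hev hr
  have hr0 : (0:ℝ) < r := by linarith
  have hB : (0:ℝ) ≤ Real.exp (-r) * (c3 * r ^ p * Real.exp (-(1/2) * r)) := by positivity
  calc ∫ t in Ioc (0:ℝ) (π * r / 2), F a r t
      ≤ ∫ _t in Ioc (0:ℝ) (π * r / 2), Real.exp (-r) * (c3 * r ^ p * Real.exp (-(1/2) * r)) :=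
        setIntegral_mono_on
          ((integrableOn_F a hr0).mono_set (fun x hx => hx.1))
          (integrableOn_const measure_Ioc_lt_top.ne) measurableSet_Ioc (hpt r hr)
    _ = (π * r / 2) * (Real.exp (-r) * (c3 * r ^ p * Real.exp (-(1/2) * r))) := by
        rw [setIntegral_const, Real.volume_real_Ioc, smul_eq_mul,
          max_eq_left (by nlinarith [mul_pos hπ hr0] : (0:ℝ) ≤ π * r / 2 - 0)]
        ring
    _ = Real.exp (-r) * ((π/2 * c3) * (r ^ (p+1) * Real.exp (-(1/2) * r))) := by
        rw [show p + 1 = p + (1:ℝ) by norm_num, Real.rpow_add hr0, Real.rpow_one]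
        ring
    _ ≤ Real.exp (-r) * r ^ (a - 1/2) :=
        mul_le_mul_of_nonneg_left hev (Real.exp_pos _).le

lemma upper (a : ℝ) : ∃ C : ℝ, 0 < C ∧ ∃ R : ℝ, 1 ≤ R ∧ ∀ r : ℝ, R ≤ r →
    ∫ t in Ioi (0:ℝ), F a r t ≤ C * r ^ (a - 1/2) * Real.exp (-r) := by
  have hπ := Real.pi_pos
  obtain ⟨C1, hC1, h1⟩ := upper1 a
  obtain ⟨C3, hC3, h3⟩ := upper3 a
  obtain ⟨R2, h2⟩ := eventually_atTop.1 (upper2 a)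
  refine ⟨1 + C1 + C3, by positivity, max R2 1, le_max_right _ _, fun r hrR => ?_⟩
  have hr : 1 ≤ r := le_trans (le_max_right _ _) hrR
  have hr0 : (0:ℝ) < r := by linarith
  have hA : (0:ℝ) ≤ π * r / 2 := by nlinarith [mul_pos hπ hr0]
  have hB : π * r / 2 ≤ 4 * π * r := by nlinarith [mul_pos hπ hr0]
  have i1 : IntegrableOn (F a r) (Ioc 0 (π*r/2)) :=
    (integrableOn_F a hr0).mono_set (fun x hx => hx.1)
  have i2 : IntegrableOn (F a r) (Ioc (π*r/2) (4*π*r)) :=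
    (integrableOn_F a hr0).mono_set (fun x hx => lt_of_le_of_lt hA hx.1)
  have i3 : IntegrableOn (F a r) (Ioi (4*π*r)) :=
    (integrableOn_F a hr0).mono_set (fun x hx => lt_of_le_of_lt (le_trans hA hB) hx)
  have i23 : IntegrableOn (F a r) (Ioi (π*r/2)) :=
    (integrableOn_F a hr0).mono_set (fun x hx => lt_of_le_of_lt hA hx)
  have e2 : ∫ t in Ioi (π*r/2), F a r t
      = (∫ t in Ioc (π*r/2) (4*π*r), F a r t) + ∫ t in Ioi (4*π*r), F a r t := by
    rw [← Ioc_union_Ioi_eq_Ioi hB]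
    exact setIntegral_union (Ioc_disjoint_Ioi le_rfl) measurableSet_Ioi i2 i3
  have e1 : ∫ t in Ioi (0:ℝ), F a r t
      = (∫ t in Ioc (0:ℝ) (π*r/2), F a r t) + ∫ t in Ioi (π*r/2), F a r t := by
    rw [← Ioc_union_Ioi_eq_Ioi hA]
    exact setIntegral_union (Ioc_disjoint_Ioi le_rfl) measurableSet_Ioi i1 i23
  have b2 : ∫ t in Ioc (0:ℝ) (π*r/2), F a r t ≤ Real.exp (-r) * r ^ (a - 1/2) :=
    h2 r (le_trans (le_max_left _ _) hrR)
  have b1 : ∫ t in Ioc (π*r/2) (4*π*r), F a r t ≤ C1 * (r ^ (a - 1/2) * Real.exp (-r)) :=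
    h1 r hr
  have b3 : ∫ t in Ioi (4*π*r), F a r t ≤ C3 * (r ^ (a - 1/2) * Real.exp (-r)) := by
    refine le_trans (h3 r hr) ?_
    have hpow : r ^ (a - 1) ≤ r ^ (a - 1/2) :=
      Real.rpow_le_rpow_of_exponent_le hr (by linarith)
    have := mul_le_mul_of_nonneg_right hpow (Real.exp_pos (-r)).le
    nlinarith [this, hC3]
  rw [e1, e2]
  nlinarith [b1, b2, b3]

end Stmt13Aux

/-- For `δ > 0`, two-sided exponential decay at infinity:
`𝓑_δ(y) ≈ |y|^{(δ−n−1)/2} e^{−|y|}` for `|y|` large. -/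
theorem stmt13 (n : ℕ) (hn : 1 ≤ n) (δ : ℝ) (hδ : 0 < δ) :
    ∃ c₁ : ℝ, 0 < c₁ ∧ ∃ c₂ : ℝ, 0 < c₂ ∧ ∃ R : ℝ, 0 < R ∧
      ∀ y : EuclideanSpace ℝ (Fin n), R ≤ ‖y‖ →
        c₁ * ‖y‖ ^ ((δ - n - 1) / 2) * Real.exp (-‖y‖) ≤ besselKernel n δ y ∧
        besselKernel n δ y ≤ c₂ * ‖y‖ ^ ((δ - n - 1) / 2) * Real.exp (-‖y‖) := by
  have hπ := Real.pi_pos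
  set a : ℝ := (δ - n) / 2 with ha
  obtain ⟨c, hc, hlow⟩ := Stmt13Aux.lower a
  obtain ⟨C, hC, R', hR', hupp⟩ := Stmt13Aux.upper a
  set c₀ : ℝ := ((4 * π) ^ (δ / 2) * Real.Gamma (δ / 2))⁻¹ with hc₀
  have hc₀0 : 0 < c₀ := by
    apply inv_pos.2
    exact mul_pos (Real.rpow_pos_of_pos (by positivity) _)
      (Real.Gamma_pos_of_pos (by positivity))
  refine ⟨c₀ * c, by positivity, c₀ * C, by positivity, R', by linarith, fun y hy => ?_⟩
  have hr1 : 1 ≤ ‖y‖ := le_trans hR' hy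
  have hexpeq : (δ - (n:ℝ) - 1) / 2 = a - 1/2 := by rw [ha]; ring
  have hkey : besselKernel n δ y = c₀ * ∫ t in Set.Ioi (0:ℝ), Stmt13Aux.F a ‖y‖ t := rfl
  constructor
  · rw [hkey, hexpeq]
    calc c₀ * c * ‖y‖ ^ (a - 1/2) * Real.exp (-‖y‖)
        = c₀ * (c * ‖y‖ ^ (a - 1/2) * Real.exp (-‖y‖)) := by ring
      _ ≤ c₀ * ∫ t in Set.Ioi (0:ℝ), Stmt13Aux.F a ‖y‖ t :=
          mul_le_mul_of_nonneg_left (hlow ‖y‖ hr1) hc₀0.le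
  · rw [hkey, hexpeq]
    calc c₀ * ∫ t in Set.Ioi (0:ℝ), Stmt13Aux.F a ‖y‖ t
        ≤ c₀ * (C * ‖y‖ ^ (a - 1/2) * Real.exp (-‖y‖)) :=
          mul_le_mul_of_nonneg_left (hupp ‖y‖ hy) hc₀0.le
      _ = c₀ * C * ‖y‖ ^ (a - 1/2) * Real.exp (-‖y‖) := by ring
end

section
/- Let n ≥ 1 be an integer. Then there exist constants c₁, c₂ > 0, depending only on n, such that for every integer j ≥ 3, c₁ (j−1)(j−2) j^{−3/2} ≤ ∫_{ℝⁿ} |y₁| 𝓑_{2j−2}(y) dy ≤ c₂ (j−1)(j−2) j^{−3/2}, where y₁ denotes the first coordinate of y. -/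
open MeasureTheory
open scoped Real

open Set ENNReal

section aux

lemma gauss_moment' {a : ℝ} (ha : 0 < a) :
    ∫ x : ℝ, |x| * Real.exp (-a * x ^ 2) = 1 / a := by
  rw [show (fun x : ℝ => |x| * Real.exp (-a * x ^ 2)) = fun x : ℝ => |x| * Real.exp (-a * |x| ^ 2) by
    funext x; rw [sq_abs]]
  rw [integral_comp_abs (f := fun x => x * Real.exp (-a * x ^ 2))]
  have h := integral_rpow_mul_exp_neg_mul_rpow (p := 2) (q := 1) (b := a) two_pos (by norm_num) ha
  have h2 : ∫ x in Ioi (0:ℝ), x * Real.exp (-a * x ^ 2)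
      = ∫ x in Ioi (0:ℝ), x ^ (1:ℝ) * Real.exp (-a * x ^ (2:ℝ)) := by
    refine setIntegral_congr_fun measurableSet_Ioi (fun x hx => ?_)
    rw [Real.rpow_one, Real.rpow_two]
  rw [h2, h, show ((1:ℝ)+1)/2 = 1 by norm_num, Real.Gamma_one,
    show (-(1+1)/2 : ℝ) = -1 by norm_num, Real.rpow_neg_one]
  field_simp

lemma gauss_moment_integrable' {a : ℝ} (ha : 0 < a) :
    Integrable (fun x : ℝ => |x| * Real.exp (-a * x ^ 2)) := by
  have := (integrable_rpow_mul_exp_neg_mul_sq ha (s := 1) (by norm_num)).abs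
  refine this.congr (Filter.Eventually.of_forall fun x => ?_)
  simp only [Real.rpow_one, abs_mul, abs_of_nonneg (Real.exp_nonneg _)]

variable {n : ℕ} (i0 : Fin n) {b : ℝ}

lemma euclid_fun_eq' {a : ℝ} (y : EuclideanSpace ℝ (Fin n)) :
    |y i0| * Real.exp (-a * ‖y‖ ^ 2)
      = ∏ i : Fin n, (if i = i0 then |y i| else 1) * Real.exp (-a * (y i) ^ 2) := by
  have hn : ‖y‖ ^ 2 = ∑ i, (y i) ^ 2 := by
    rw [EuclideanSpace.norm_eq, Real.sq_sqrt (by positivity)]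
    simp [sq_abs]
  rw [hn, Finset.prod_mul_distrib, ← Real.exp_sum]
  simp only [Finset.prod_ite_eq', Finset.mem_univ, if_true]
  congr 2
  rw [Finset.mul_sum]

lemma euclid_moment' {a : ℝ} (ha : 0 < a) :
    ∫ y : EuclideanSpace ℝ (Fin n), |y i0| * Real.exp (-a * ‖y‖ ^ 2)
      = (1 / a) * Real.sqrt (π / a) ^ (n - 1) := by
  have vp := (EuclideanSpace.volume_preserving_symm_measurableEquiv_toLp (Fin n)).symm
  rw [← vp.integral_comp' (fun y : EuclideanSpace ℝ (Fin n) => |y i0| * Real.exp (-a * ‖y‖ ^ 2))]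
  have key : ∀ x : Fin n → ℝ,
      |((MeasurableEquiv.toLp 2 (Fin n → ℝ)) x) i0|
        * Real.exp (-a * ‖(MeasurableEquiv.toLp 2 (Fin n → ℝ)) x‖ ^ 2)
      = ∏ i : Fin n, (if i = i0 then |x i| else 1) * Real.exp (-a * (x i) ^ 2) := by
    intro x
    rw [euclid_fun_eq' i0]
    congr 1
  calc ∫ x : Fin n → ℝ, |((MeasurableEquiv.toLp 2 (Fin n → ℝ)) x) i0|
        * Real.exp (-a * ‖(MeasurableEquiv.toLp 2 (Fin n → ℝ)) x‖ ^ 2)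
      = ∫ x : Fin n → ℝ, ∏ i : Fin n, (if i = i0 then |x i| else 1) * Real.exp (-a * (x i) ^ 2) := by
        exact integral_congr_ae (Filter.Eventually.of_forall key)
    _ = ∏ i : Fin n, ∫ u : ℝ, (if i = i0 then |u| else 1) * Real.exp (-a * u ^ 2) := by
        exact MeasureTheory.integral_fintype_prod_eq_prod
          (fun i u => (if i = i0 then |u| else 1) * Real.exp (-a * u ^ 2))
    _ = (1 / a) * Real.sqrt (π / a) ^ (n - 1) := by
        rw [← Finset.mul_prod_erase Finset.univ _ (Finset.mem_univ i0)]
        simp only [eq_self_iff_true, if_true]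
        rw [gauss_moment' ha]
        congr 1
        rw [Finset.prod_congr rfl (fun i hi =>
          show _ = ∫ u : ℝ, Real.exp (-a * u ^ 2) by
            simp only [if_neg (Finset.ne_of_mem_erase hi), one_mul]), Finset.prod_const,
          Finset.card_erase_of_mem (Finset.mem_univ i0),
          Finset.card_univ, Fintype.card_fin]
        rw [integral_gaussian a]

lemma euclid_moment_integrable' {a : ℝ} (ha : 0 < a) :
    Integrable (fun y : EuclideanSpace ℝ (Fin n) => |y i0| * Real.exp (-a * ‖y‖ ^ 2)) := by
  have vp := (EuclideanSpace.volume_preserving_symm_measurableEquiv_toLp (Fin n)).symm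
  rw [← vp.integrable_comp_emb (MeasurableEquiv.measurableEmbedding _)]
  have h : Integrable (fun x : Fin n → ℝ =>
      ∏ i : Fin n, (if i = i0 then |x i| else 1) * Real.exp (-a * (x i) ^ 2)) := by
    refine Integrable.fintype_prod_dep
      (f := fun i (u : ℝ) => (if i = i0 then |u| else 1) * Real.exp (-a * u ^ 2)) (fun i => ?_)
    by_cases h : i = i0
    · subst h; simpa using gauss_moment_integrable' ha
    · simpa [if_neg h] using integrable_exp_neg_mul_sq ha
  refine h.congr (Filter.Eventually.of_forall fun x => ?_)
  exact ((euclid_fun_eq' i0 (a := a) ((MeasurableEquiv.toLp 2 (Fin n → ℝ)) x))).symm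

lemma bessel_meas' :
    Measurable (fun p : EuclideanSpace ℝ (Fin n) × ℝ =>
      ENNReal.ofReal (|p.1 i0| * besselIntegrand n b p.1 p.2)) := by
  unfold besselIntegrand
  have h1 : Measurable (fun p : EuclideanSpace ℝ (Fin n) × ℝ => p.1 i0) :=
    (measurable_pi_apply i0).comp ((WithLp.measurable_ofLp 2 _).comp measurable_fst)
  have h2 : Measurable (fun p : EuclideanSpace ℝ (Fin n) × ℝ => ‖p.1‖) :=
    continuous_fst.norm.measurable
  fun_prop

lemma bessel_meas2' :
    Measurable (fun p : EuclideanSpace ℝ (Fin n) × ℝ =>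
      ENNReal.ofReal (besselIntegrand n b p.1 p.2)) := by
  unfold besselIntegrand
  have h2 : Measurable (fun p : EuclideanSpace ℝ (Fin n) × ℝ => ‖p.1‖) :=
    continuous_fst.norm.measurable
  fun_prop

lemma gamma_ratio_up' {x : ℝ} (hx : 0 < x) :
    Real.Gamma (x + 1/2) ≤ Real.sqrt x * Real.Gamma x := by
  have h := Real.Gamma_mul_add_mul_le_rpow_Gamma_mul_rpow_Gamma (s := x) (t := x+1)
    hx (by linarith) (by norm_num : (0:ℝ) < 1/2) (by norm_num : (0:ℝ) < 1/2) (by norm_num)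
  rw [show (1/2 : ℝ) * x + 1/2 * (x+1) = x + 1/2 by ring] at h
  rw [Real.Gamma_add_one hx.ne'] at h
  calc Real.Gamma (x + 1/2) ≤ Real.Gamma x ^ ((1:ℝ)/2) * (x * Real.Gamma x) ^ ((1:ℝ)/2) := h
    _ = Real.sqrt x * Real.Gamma x := by
        rw [← Real.sqrt_eq_rpow, ← Real.sqrt_eq_rpow, ← Real.sqrt_mul (Real.Gamma_pos_of_pos hx).le,
          show Real.Gamma x * (x * Real.Gamma x) = x * Real.Gamma x ^ 2 by ring,
          Real.sqrt_mul hx.le, Real.sqrt_sq (Real.Gamma_pos_of_pos hx).le]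

lemma gamma_ratio_low' {x : ℝ} (hx : 0 < x) :
    x * Real.Gamma x ≤ Real.sqrt (x + 1/2) * Real.Gamma (x + 1/2) := by
  have hx2 : (0:ℝ) < x + 1/2 := by linarith
  have h := Real.Gamma_mul_add_mul_le_rpow_Gamma_mul_rpow_Gamma (s := x + 1/2) (t := x + 3/2)
    hx2 (by linarith) (by norm_num : (0:ℝ) < 1/2) (by norm_num : (0:ℝ) < 1/2) (by norm_num)
  rw [show (1/2 : ℝ) * (x + 1/2) + 1/2 * (x + 3/2) = x + 1 by ring] at h
  rw [Real.Gamma_add_one hx.ne'] at h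
  rw [show x + (3:ℝ)/2 = (x + 1/2) + 1 by ring, Real.Gamma_add_one hx2.ne'] at h
  calc x * Real.Gamma x
      ≤ Real.Gamma (x + 1/2) ^ ((1:ℝ)/2) * ((x + 1/2) * Real.Gamma (x + 1/2)) ^ ((1:ℝ)/2) := h
    _ = Real.sqrt (x + 1/2) * Real.Gamma (x + 1/2) := by
        rw [← Real.sqrt_eq_rpow, ← Real.sqrt_eq_rpow,
          ← Real.sqrt_mul (Real.Gamma_pos_of_pos hx2).le,
          show Real.Gamma (x+1/2) * ((x+1/2) * Real.Gamma (x+1/2))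
            = (x+1/2) * Real.Gamma (x+1/2) ^ 2 by ring,
          Real.sqrt_mul hx2.le, Real.sqrt_sq (Real.Gamma_pos_of_pos hx2).le]

lemma rpow_neg32' {x : ℝ} (hx : 0 < x) :
    x ^ (-(3:ℝ)/2) = (x * Real.sqrt x)⁻¹ := by
  rw [show (-(3:ℝ)/2) = -(3/2) by ring, Real.rpow_neg hx.le]
  congr 1
  rw [show (3/2:ℝ) = 1 + 1/2 by norm_num, Real.rpow_add hx, Real.rpow_one, ← Real.sqrt_eq_rpow]

lemma ineq_low' {x : ℝ} (hx : 2 ≤ x) :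
    x * (x-1) * (x+1) ^ (-(3:ℝ)/2) ≤ x / Real.sqrt (x + 1/2) := by
  have hx1 : (0:ℝ) < x + 1 := by linarith
  have hxh : (0:ℝ) < x + 1/2 := by linarith
  rw [rpow_neg32' hx1, ← div_eq_mul_inv, div_le_div_iff₀ (by positivity) (by positivity)]
  have h1 : Real.sqrt (x + 1/2) ≤ Real.sqrt (x+1) := Real.sqrt_le_sqrt (by linarith)
  have h2 : (0:ℝ) ≤ Real.sqrt (x + 1/2) := Real.sqrt_nonneg _
  have h3 : (0:ℝ) ≤ Real.sqrt (x + 1) := Real.sqrt_nonneg _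
  nlinarith [mul_nonneg (mul_nonneg (by linarith : (0:ℝ) ≤ x) (by linarith : (0:ℝ) ≤ x - 1))
    (sub_nonneg.2 h1), mul_nonneg (by linarith : (0:ℝ) ≤ 2*x) h3]

lemma ineq_up' {x : ℝ} (hx : 2 ≤ x) :
    Real.sqrt x ≤ 9/2 * (x * (x-1) * (x+1) ^ (-(3:ℝ)/2)) := by
  have hx0 : (0:ℝ) < x := by linarith
  have hx1 : (0:ℝ) < x + 1 := by linarith
  rw [rpow_neg32' hx1]
  rw [show (9:ℝ)/2 * (x * (x-1) * ((x+1) * Real.sqrt (x+1))⁻¹)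
      = 9/2 * (x * (x-1)) / ((x+1) * Real.sqrt (x+1)) by ring]
  rw [le_div_iff₀ (by positivity)]
  set u := Real.sqrt x with hu
  set v := Real.sqrt (x+1) with hv
  have hu2 : u ^ 2 = x := Real.sq_sqrt hx0.le
  have hv2 : v ^ 2 = x + 1 := Real.sq_sqrt hx1.le
  have hu0 : 0 ≤ u := Real.sqrt_nonneg _
  have hv0 : 0 ≤ v := Real.sqrt_nonneg _
  have key : (u * ((x+1) * v)) ^ 2 ≤ (9/2 * (x * (x-1))) ^ 2 := by
    have expand : (u * ((x+1) * v)) ^ 2 = x * (x+1) ^ 3 := by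
      rw [mul_pow, mul_pow, hu2, hv2]; ring
    rw [expand]
    nlinarith [sq_nonneg (x-2), mul_nonneg (by linarith : (0:ℝ) ≤ x - 2) (sq_nonneg (x-2)),
      mul_nonneg (mul_nonneg hx0.le (by linarith : (0:ℝ) ≤ x - 2)) (sq_nonneg (x-2)),
      mul_nonneg hx0.le (sq_nonneg (x-2))]
  have h9 : 0 ≤ 9/2 * (x * (x-1)) := by nlinarith
  have hleft : 0 ≤ u * ((x+1) * v) := by positivity
  exact (pow_le_pow_iff_left₀ hleft h9 two_ne_zero).1 key

variable {n : ℕ} (i0 : Fin n) {b : ℝ}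

lemma J_val (hn : 0 < n) (hb : 0 < b) :
    ∫ y : EuclideanSpace ℝ (Fin n), |y i0| * ∫ t in Ioi (0:ℝ), besselIntegrand n b y t
      = (4*π) ^ ((b+1)/2) * Real.Gamma ((b+1)/2) / π := by
  set q : ℝ := (b+1)/2 with hqdef
  have hq : 0 < q := by positivity
  -- pointwise-in-t value of the y-lintegral
  have key_t : ∀ t ∈ Ioi (0:ℝ),
      (∫⁻ y : EuclideanSpace ℝ (Fin n), ENNReal.ofReal (|y i0| * besselIntegrand n b y t))
        = ENNReal.ofReal (Real.exp (-t/(4*π)) * t ^ (q - 1) / π) := by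
    intro t ht
    have ht' : (0:ℝ) < t := ht
    have ha : 0 < π / t := div_pos Real.pi_pos ht'
    have hc : 0 ≤ Real.exp (-t/(4*π)) * t ^ ((b - (n:ℝ))/2 - 1) := by positivity
    have hrw : ∀ y : EuclideanSpace ℝ (Fin n), |y i0| * besselIntegrand n b y t
        = (Real.exp (-t/(4*π)) * t ^ ((b - (n:ℝ))/2 - 1))
          * (|y i0| * Real.exp (-(π/t) * ‖y‖ ^ 2)) := by
      intro y
      unfold besselIntegrand
      rw [show -π * ‖y‖ ^ 2 / t = -(π/t) * ‖y‖ ^ 2 by ring]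
      ring
    simp_rw [hrw, ENNReal.ofReal_mul hc]
    rw [lintegral_const_mul' _ _ ENNReal.ofReal_ne_top,
      ← ofReal_integral_eq_lintegral_ofReal (euclid_moment_integrable' i0 ha)
        (Filter.Eventually.of_forall fun y => by positivity),
      euclid_moment' i0 ha, ← ENNReal.ofReal_mul hc]
    congr 1
    have hpa : π / (π / t) = t := by field_simp
    have h1a : 1 / (π / t) = t / π := by field_simp
    rw [hpa, h1a]
    have hsq : Real.sqrt t ^ (n - 1) = t ^ (((n:ℝ) - 1)/2) := by
      rw [Real.sqrt_eq_rpow, ← Real.rpow_natCast (t ^ ((1:ℝ)/2)) (n-1),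
        ← Real.rpow_mul ht'.le, Nat.cast_sub hn, Nat.cast_one]
      ring_nf
    rw [hsq]
    have h1 : t ^ ((b - (n:ℝ))/2 - 1) * (t * t ^ (((n:ℝ) - 1)/2)) = t ^ (q - 1) := by
      nth_rewrite 2 [← Real.rpow_one t]
      rw [← Real.rpow_add ht', ← Real.rpow_add ht']
      congr 1
      rw [hqdef]; ring
    calc Real.exp (-t/(4*π)) * t ^ ((b - (n:ℝ))/2 - 1) * (t / π * t ^ (((n:ℝ) - 1)/2))
        = Real.exp (-t/(4*π)) * (t ^ ((b - (n:ℝ))/2 - 1) * (t * t ^ (((n:ℝ) - 1)/2))) / π := by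
          ring
      _ = Real.exp (-t/(4*π)) * t ^ (q - 1) / π := by rw [h1]
  -- the t-integral of the resulting function
  have hint : IntegrableOn (fun t : ℝ => t ^ (q-1) * Real.exp (-(1/(4*π)) * t) * (1/π))
      (Ioi 0) := by
    have h := integrableOn_rpow_mul_exp_neg_mul_rpow (s := q-1) (p := 1) (b := 1/(4*π))
      (by linarith) one_pos (by positivity)
    have : (fun t : ℝ => t ^ (q-1) * Real.exp (-(1/(4*π)) * t) * (1/π))
        = fun t : ℝ => (t ^ (q-1) * Real.exp (-(1/(4*π)) * t ^ (1:ℝ))) * (1/π) := by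
      funext t; rw [Real.rpow_one]
    rw [this]
    exact h.mul_const _
  have hval : ∫ t in Ioi (0:ℝ), t ^ (q-1) * Real.exp (-(1/(4*π)) * t) * (1/π)
      = (4*π) ^ q * Real.Gamma q / π := by
    have : (fun t : ℝ => t ^ (q-1) * Real.exp (-(1/(4*π)) * t) * (1/π))
        = fun t : ℝ => (t ^ (q-1) * Real.exp (-(1/(4*π)) * t ^ (1:ℝ))) * (1/π) := by
      funext t; rw [Real.rpow_one]
    rw [this, integral_mul_const,
      integral_rpow_mul_exp_neg_mul_rpow one_pos (by linarith) (by positivity)]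
    rw [show (-(q-1+1)/1 : ℝ) = -q by ring, show ((q-1+1)/1 : ℝ) = q by ring]
    rw [one_div (4*π), ← Real.rpow_neg_one (4*π)]
    rw [← Real.rpow_mul (by positivity : (0:ℝ) ≤ 4*π)]
    norm_num
    ring
  -- assemble
  have hmeas := bessel_meas' (i0 := i0) (b := b)
  have hmeas2 := bessel_meas2' (n := n) (b := b)
  have hswap := lintegral_lintegral_swap
    (μ := (volume : Measure (EuclideanSpace ℝ (Fin n))))
    (ν := (volume : Measure ℝ).restrict (Ioi 0))
    (f := fun y t => ENNReal.ofReal (|y i0| * besselIntegrand n b y t))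
    hmeas.aemeasurable
  have hfun : ∀ t : ℝ, Real.exp (-t/(4*π)) * t ^ (q-1) / π
      = t ^ (q-1) * Real.exp (-(1/(4*π)) * t) * (1/π) := by
    intro t; rw [show -t/(4*π) = -(1/(4*π))*t by ring]; ring
  have hT : (∫⁻ t in Ioi (0:ℝ), ∫⁻ y : EuclideanSpace ℝ (Fin n),
        ENNReal.ofReal (|y i0| * besselIntegrand n b y t))
      = ENNReal.ofReal ((4*π) ^ q * Real.Gamma q / π) := by
    rw [setLIntegral_congr_fun_ae measurableSet_Ioi (ae_of_all _ key_t)]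
    simp_rw [hfun]
    rw [← ofReal_integral_eq_lintegral_ofReal hint
      ((ae_restrict_iff' measurableSet_Ioi).2 (ae_of_all _ fun t ht => by
        have ht' : (0:ℝ) < t := ht
        positivity)), hval]
  have hfin : (∫⁻ y : EuclideanSpace ℝ (Fin n), ∫⁻ t in Ioi (0:ℝ),
      ENNReal.ofReal (|y i0| * besselIntegrand n b y t)) ≠ ∞ := by
    rw [hswap, hT]; exact ENNReal.ofReal_ne_top
  set F : EuclideanSpace ℝ (Fin n) → ℝ≥0∞ :=
    fun y => ∫⁻ t in Ioi (0:ℝ), ENNReal.ofReal (besselIntegrand n b y t) with hF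
  set G : EuclideanSpace ℝ (Fin n) → ℝ≥0∞ :=
    fun y => ∫⁻ t in Ioi (0:ℝ), ENNReal.ofReal (|y i0| * besselIntegrand n b y t) with hG
  have hmeasG : Measurable G := hmeas.lintegral_prod_right'
  have hGF : ∀ y, G y = ENNReal.ofReal |y i0| * F y := by
    intro y
    rw [hG, hF]
    simp only
    rw [← lintegral_const_mul' _ _ ENNReal.ofReal_ne_top]
    congr 1
    funext t
    rw [ENNReal.ofReal_mul (abs_nonneg _)]
  have hK : ∀ y : EuclideanSpace ℝ (Fin n),
      (∫ t in Ioi (0:ℝ), besselIntegrand n b y t) = (F y).toReal := by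
    intro y
    rw [integral_eq_lintegral_of_nonneg_ae
      ((ae_restrict_iff' measurableSet_Ioi).2 (ae_of_all _ fun t ht => by
        have ht' : (0:ℝ) < t := ht
        unfold besselIntegrand; positivity))
      (by
        have : Measurable (fun t : ℝ => besselIntegrand n b y t) := by
          unfold besselIntegrand
          fun_prop
        exact this.aestronglyMeasurable)]
  have haeG : ∀ᵐ y : EuclideanSpace ℝ (Fin n), G y < ∞ := ae_lt_top hmeasG hfin
  have hae2 : ∀ᵐ y : EuclideanSpace ℝ (Fin n),
      ENNReal.ofReal (|y i0| * (F y).toReal) = G y := by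
    refine haeG.mono fun y hy => ?_
    rw [hGF y] at hy ⊢
    by_cases h0 : |y i0| = 0
    · simp [h0]
    · have habs : (0:ℝ) < |y i0| := lt_of_le_of_ne (abs_nonneg _) (Ne.symm h0)
      have hFy : F y ≠ ∞ := by
        intro hFi
        rw [hFi, ENNReal.mul_top (by simpa using habs.ne')] at hy
        exact (lt_irrefl _ hy)
      rw [ENNReal.ofReal_mul (abs_nonneg _), ENNReal.ofReal_toReal hFy]
  calc ∫ y : EuclideanSpace ℝ (Fin n), |y i0| * ∫ t in Ioi (0:ℝ), besselIntegrand n b y t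
      = ∫ y : EuclideanSpace ℝ (Fin n), |y i0| * (F y).toReal := by
        simp_rw [hK]
    _ = (∫⁻ y : EuclideanSpace ℝ (Fin n), ENNReal.ofReal (|y i0| * (F y).toReal)).toReal := by
        rw [integral_eq_lintegral_of_nonneg_ae
          (ae_of_all _ fun y => mul_nonneg (abs_nonneg _) ENNReal.toReal_nonneg)
          (by
            have hm1 : Measurable (fun y : EuclideanSpace ℝ (Fin n) => |y i0|) :=
              ((measurable_pi_apply i0).comp (WithLp.measurable_ofLp 2 _)).abs
            have hm2 : Measurable F := hmeas2.lintegral_prod_right'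
            exact (hm1.mul (hm2.ennreal_toReal)).aestronglyMeasurable)]
    _ = (∫⁻ y : EuclideanSpace ℝ (Fin n), G y).toReal := by
        rw [lintegral_congr_ae hae2]
    _ = (4*π) ^ q * Real.Gamma q / π := by
        rw [hG]
        simp only
        rw [hswap, hT, ENNReal.toReal_ofReal]
        have := Real.Gamma_pos_of_pos hq
        positivity

lemma V_val (hn : 0 < n) (hb : 0 < b) :
    ∫ y : EuclideanSpace ℝ (Fin n), |y i0| * besselKernel n b y
      = ((4*π) ^ (b/2) * Real.Gamma (b/2))⁻¹
        * ((4*π) ^ ((b+1)/2) * Real.Gamma ((b+1)/2) / π) := by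
  have h : (fun y : EuclideanSpace ℝ (Fin n) => |y i0| * besselKernel n b y)
      = fun y => ((4*π) ^ (b/2) * Real.Gamma (b/2))⁻¹ *
          (|y i0| * ∫ t in Ioi (0:ℝ), besselIntegrand n b y t) := by
    funext y; unfold besselKernel; ring
  rw [h, integral_const_mul, J_val i0 hn hb]

end aux


lemma ratio_bounds {x : ℝ} (hx : 2 ≤ x) :
    x * (x-1) * (x+1) ^ (-(3:ℝ)/2) ≤ Real.Gamma (x + 1/2) / Real.Gamma x ∧
    Real.Gamma (x + 1/2) / Real.Gamma x ≤ 9/2 * (x * (x-1) * (x+1) ^ (-(3:ℝ)/2)) := by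
  have hx0 : (0:ℝ) < x := by linarith
  have hGx : 0 < Real.Gamma x := Real.Gamma_pos_of_pos hx0
  have hs : 0 < Real.sqrt (x + 1/2) := Real.sqrt_pos.2 (by linarith)
  constructor
  · refine le_trans (ineq_low' hx) ?_
    rw [div_le_div_iff₀ hs hGx]
    calc x * Real.Gamma x ≤ Real.sqrt (x + 1/2) * Real.Gamma (x + 1/2) := gamma_ratio_low' hx0
      _ = Real.Gamma (x + 1/2) * Real.sqrt (x + 1/2) := by ring
  · refine le_trans ?_ (ineq_up' hx)
    rw [div_le_iff₀ hGx]
    exact gamma_ratio_up' hx0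

/-- `∫_{ℝⁿ} |y₁| 𝓑_{2j−2}(y) dy ≈ₙ (j−1)(j−2)/j^{3/2}` for integers `j ≥ 3`. -/
theorem stmt15 (n : ℕ) (hn : 0 < n) :
    ∃ c₁ : ℝ, 0 < c₁ ∧ ∃ c₂ : ℝ, 0 < c₂ ∧ ∀ j : ℕ, 3 ≤ j →
      c₁ * (((j : ℝ) - 1) * ((j : ℝ) - 2) * (j : ℝ) ^ (-(3 : ℝ) / 2)) ≤
        (∫ y : EuclideanSpace ℝ (Fin n), |y ⟨0, hn⟩| * besselKernel n (2 * j - 2) y) ∧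
      (∫ y : EuclideanSpace ℝ (Fin n), |y ⟨0, hn⟩| * besselKernel n (2 * j - 2) y) ≤
        c₂ * (((j : ℝ) - 1) * ((j : ℝ) - 2) * (j : ℝ) ^ (-(3 : ℝ) / 2)) := by
  have hsπ : 0 < Real.sqrt π := Real.sqrt_pos.2 Real.pi_pos
  refine ⟨2 / Real.sqrt π, by positivity, 9 / Real.sqrt π, by positivity, fun j hj => ?_⟩
  have hj3 : (3:ℝ) ≤ (j:ℝ) := by exact_mod_cast hj
  have hx2 : (2:ℝ) ≤ (j:ℝ) - 1 := by linarith
  have hx0 : (0:ℝ) < (j:ℝ) - 1 := by linarith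
  have hb : (0:ℝ) < 2*(j:ℝ) - 2 := by linarith
  have hGx : 0 < Real.Gamma ((j:ℝ) - 1) := Real.Gamma_pos_of_pos hx0
  have hGxh : 0 < Real.Gamma ((j:ℝ) - 1 + 1/2) := Real.Gamma_pos_of_pos (by linarith)
  have h4π : (0:ℝ) < 4*π := by positivity
  have hVal : (∫ y : EuclideanSpace ℝ (Fin n), |y ⟨0, hn⟩| * besselKernel n (2 * j - 2) y)
      = 2 / Real.sqrt π * (Real.Gamma ((j:ℝ) - 1 + 1/2) / Real.Gamma ((j:ℝ) - 1)) := by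
    rw [V_val ⟨0, hn⟩ hn hb]
    rw [show (2*(j:ℝ)-2)/2 = (j:ℝ) - 1 by ring,
      show (2*(j:ℝ)-2+1)/2 = ((j:ℝ) - 1) + 1/2 by ring,
      Real.rpow_add h4π ((j:ℝ) - 1) (1/2)]
    have hhalf : (4*π:ℝ) ^ ((1:ℝ)/2) = 2 * Real.sqrt π := by
      rw [← Real.sqrt_eq_rpow, show (4:ℝ)*π = 2^2*π by ring,
        Real.sqrt_mul (by positivity : (0:ℝ) ≤ 2^2), Real.sqrt_sq (by norm_num : (0:ℝ) ≤ 2)]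
    rw [hhalf]
    have hpow : (0:ℝ) < (4*π) ^ ((j:ℝ) - 1) := Real.rpow_pos_of_pos h4π _
    have hππ : Real.sqrt π * Real.sqrt π = π := Real.mul_self_sqrt Real.pi_pos.le
    field_simp
    ring_nf
    rw [Real.sq_sqrt Real.pi_pos.le]
  have hfeq : ((j:ℝ) - 1) * ((j:ℝ) - 2) * (j:ℝ) ^ (-(3:ℝ)/2)
      = ((j:ℝ) - 1) * (((j:ℝ) - 1) - 1) * (((j:ℝ) - 1) + 1) ^ (-(3:ℝ)/2) := by
    rw [show ((j:ℝ) - 1) + 1 = (j:ℝ) by ring]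
    ring_nf
  obtain ⟨hl, hu⟩ := ratio_bounds hx2
  rw [hVal, hfeq]
  constructor
  · exact mul_le_mul_of_nonneg_left hl (by positivity)
  · calc 2 / Real.sqrt π * (Real.Gamma ((j:ℝ) - 1 + 1/2) / Real.Gamma ((j:ℝ) - 1))
        ≤ 2 / Real.sqrt π * (9/2 * (((j:ℝ) - 1) * (((j:ℝ) - 1) - 1)
            * (((j:ℝ) - 1) + 1) ^ (-(3:ℝ)/2))) := mul_le_mul_of_nonneg_left hu (by positivity)
      _ = 9 / Real.sqrt π * (((j:ℝ) - 1) * (((j:ℝ) - 1) - 1)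
            * (((j:ℝ) - 1) + 1) ^ (-(3:ℝ)/2)) := by ring
end

section
/- Let n ≥ 2 be an integer, 0 < α < 2, C > 0, and ν₁ > 0. Let m > 0 and ε > 0 satisfy: m < min{ 2ν₁/(C√(α(n−1))), ν₁(1+α)/(α ε √(n−1)) } and ε < ν₁/(m√(n−1)) − α √(n−1) m C²/(4ν₁). Define λ := ν₁(1+α)/4 − α ε √(n−1) m/4 − (1/2)·√( ν₁²(1−α)²/4 + m ν₁ α(1−α) ε √(n−1)/2 + m² α²(n−1)(ε² + C²)/4 ). Then λ > 0, and for all real numbers A ≥ 0 and B ≥ 0: λ(A² + B²) ≤ (ν₁/2) A² + (α ν₁/2) B² − (α m √(n−1) C / 2) A·B − (α ε √(n−1) m / 2) B². -/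
/-!
With `s = √(n-1)`, the right-hand side is the quadratic form `a A² - 2b AB + c B²` with
`a = ν₁/2`, `b = αmsC/4`, `c = αν₁/2 - αεsm/2`, and `λ` is the smaller eigenvalue of its
matrix, so the form dominates `λ (A² + B²)`. This eigenvalue is positive exactly when the
trace `a + c` and the determinant `ac - b²` are: the bound on `m` gives the first, the bound
on `ε` the second.
-/

open Real

theorem two_mul_mul_le_of_mul_eq_sq {p q b : ℝ} (hp : 0 ≤ p) (hq : 0 ≤ q)
    (hpq : p * q = b ^ 2) (A B : ℝ) : 2 * b * (A * B) ≤ p * A ^ 2 + q * B ^ 2 := by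
  have hb : |b| = √p * √q := by rw [← sqrt_mul hp, hpq, sqrt_sq_eq_abs]
  calc 2 * b * (A * B) ≤ 2 * (|b| * (|A| * |B|)) := by
        rw [← abs_mul, ← abs_mul]
        linarith [le_abs_self (b * (A * B))]
    _ = 2 * (√p * |A|) * (√q * |B|) := by rw [hb]; ring
    _ ≤ (√p * |A|) ^ 2 + (√q * |B|) ^ 2 := two_mul_le_add_sq _ _
    _ = p * A ^ 2 + q * B ^ 2 := by rw [mul_pow, mul_pow, sq_sqrt hp, sq_sqrt hq, sq_abs, sq_abs]

/-- The smaller eigenvalue of the symmetric matrix `!![a, -b; -b, c]`. -/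
noncomputable def minEigenvalue₂ (a b c : ℝ) : ℝ :=
  (a + c) / 2 - √((a - c) ^ 2 + 4 * b ^ 2) / 2

theorem minEigenvalue₂_mul_le (a b c A B : ℝ) :
    minEigenvalue₂ a b c * (A ^ 2 + B ^ 2) ≤ a * A ^ 2 + c * B ^ 2 - 2 * b * (A * B) := by
  have hu : |a - c| ≤ √((a - c) ^ 2 + 4 * b ^ 2) := abs_le_sqrt (by nlinarith [sq_nonneg b])
  have hu2 : √((a - c) ^ 2 + 4 * b ^ 2) ^ 2 = (a - c) ^ 2 + 4 * b ^ 2 := sq_sqrt (by positivity)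
  have hp : 0 ≤ a - minEigenvalue₂ a b c := by
    unfold minEigenvalue₂; linarith [neg_abs_le (a - c)]
  have hq : 0 ≤ c - minEigenvalue₂ a b c := by
    unfold minEigenvalue₂; linarith [le_abs_self (a - c)]
  -- `λ` is a root of the characteristic polynomial `(a - λ)(c - λ) - b²`
  have hchar : (a - minEigenvalue₂ a b c) * (c - minEigenvalue₂ a b c) = b ^ 2 := by
    unfold minEigenvalue₂; linear_combination hu2 / 4
  linarith [two_mul_mul_le_of_mul_eq_sq hp hq hchar A B]

theorem minEigenvalue₂_pos {a b c : ℝ} (hdet : b ^ 2 < a * c) (htrace : 0 < a + c) :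
    0 < minEigenvalue₂ a b c := by
  have hu : √((a - c) ^ 2 + 4 * b ^ 2) < a + c := (sqrt_lt' htrace).2 (by linarith)
  unfold minEigenvalue₂
  linarith

theorem stmt16_general (n : ℕ) (hn : 2 ≤ n) (α : ℝ) (hα0 : 0 < α)
    (C ν₁ m ε : ℝ) (hν₁ : 0 < ν₁) (hm : 0 < m) (hε : 0 < ε)
    (hmlt : m < min (2 * ν₁ / (C * Real.sqrt (α * ((n : ℝ) - 1))))
      (ν₁ * (1 + α) / (α * ε * Real.sqrt ((n : ℝ) - 1))))
    (hεlt : ε < ν₁ / (m * Real.sqrt ((n : ℝ) - 1)) -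
      α * Real.sqrt ((n : ℝ) - 1) * m * C ^ 2 / (4 * ν₁)) :
    0 < ν₁ * (1 + α) / 4 - α * ε * Real.sqrt ((n : ℝ) - 1) * m / 4 -
        (1 / 2) * Real.sqrt (ν₁ ^ 2 * (1 - α) ^ 2 / 4 +
          m * ν₁ * (α * (1 - α) * ε * Real.sqrt ((n : ℝ) - 1)) / 2 +
          m ^ 2 * (α ^ 2 * ((n : ℝ) - 1) * (ε ^ 2 + C ^ 2)) / 4) ∧
    ∀ A B : ℝ, 0 ≤ A → 0 ≤ B →
      (ν₁ * (1 + α) / 4 - α * ε * Real.sqrt ((n : ℝ) - 1) * m / 4 -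
          (1 / 2) * Real.sqrt (ν₁ ^ 2 * (1 - α) ^ 2 / 4 +
            m * ν₁ * (α * (1 - α) * ε * Real.sqrt ((n : ℝ) - 1)) / 2 +
            m ^ 2 * (α ^ 2 * ((n : ℝ) - 1) * (ε ^ 2 + C ^ 2)) / 4)) * (A ^ 2 + B ^ 2) ≤
        ν₁ / 2 * A ^ 2 + α * ν₁ / 2 * B ^ 2 -
          α * m * Real.sqrt ((n : ℝ) - 1) * C / 2 * (A * B) -
          α * ε * Real.sqrt ((n : ℝ) - 1) * m / 2 * B ^ 2 := by
  have hn1 : (1 : ℝ) ≤ (n : ℝ) - 1 := by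
    have : (2 : ℝ) ≤ n := by exact_mod_cast hn
    linarith
  set s := √((n : ℝ) - 1)
  have hs : 0 < s := sqrt_pos.2 (by linarith)
  have hs2 : s ^ 2 = (n : ℝ) - 1 := sq_sqrt (by linarith)
  have hlam : ν₁ * (1 + α) / 4 - α * ε * s * m / 4 -
      (1 / 2) * √(ν₁ ^ 2 * (1 - α) ^ 2 / 4 + m * ν₁ * (α * (1 - α) * ε * s) / 2 +
        m ^ 2 * (α ^ 2 * ((n : ℝ) - 1) * (ε ^ 2 + C ^ 2)) / 4) =
      minEigenvalue₂ (ν₁ / 2) (α * m * s * C / 4) (α * ν₁ / 2 - α * ε * s * m / 2) := by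
    rw [minEigenvalue₂, ← hs2]
    ring_nf
  have htrace : 0 < ν₁ / 2 + (α * ν₁ / 2 - α * ε * s * m / 2) := by
    have := (lt_div_iff₀ (by positivity)).1 (lt_min_iff.1 hmlt).2
    linarith
  have hdet : (α * m * s * C / 4) ^ 2 < ν₁ / 2 * (α * ν₁ / 2 - α * ε * s * m / 2) := by
    rw [div_sub_div _ _ (by positivity) (by positivity), lt_div_iff₀ (by positivity)] at hεlt
    linarith [mul_lt_mul_of_pos_left hεlt hα0]
  rw [hlam]
  refine ⟨minEigenvalue₂_pos hdet htrace, fun A B _ _ => ?_⟩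
  linarith [minEigenvalue₂_mul_le (ν₁ / 2) (α * m * s * C / 4)
    (α * ν₁ / 2 - α * ε * s * m / 2) A B]

/-- The quadratic-form inequality underlying Claim 1 of the paper's main smoothing lemma:
with `m = |ν̄|` and under conditions (1.2)–(1.3), the constant `λ` is positive and
`λ(A² + B²) ≤ (ν₁/2)A² + (αν₁/2)B² − (αm√(n−1)C/2)AB − (αε√(n−1)m/2)B²`
for all `A, B ≥ 0`. -/
theorem stmt16 (n : ℕ) (hn : 2 ≤ n) (α : ℝ) (hα0 : 0 < α) (hα2 : α < 2)
    (C ν₁ m ε : ℝ) (hC : 0 < C) (hν₁ : 0 < ν₁) (hm : 0 < m) (hε : 0 < ε)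
    (hmlt : m < min (2 * ν₁ / (C * Real.sqrt (α * ((n : ℝ) - 1))))
      (ν₁ * (1 + α) / (α * ε * Real.sqrt ((n : ℝ) - 1))))
    (hεlt : ε < ν₁ / (m * Real.sqrt ((n : ℝ) - 1)) -
      α * Real.sqrt ((n : ℝ) - 1) * m * C ^ 2 / (4 * ν₁)) :
    0 < ν₁ * (1 + α) / 4 - α * ε * Real.sqrt ((n : ℝ) - 1) * m / 4 -
        (1 / 2) * Real.sqrt (ν₁ ^ 2 * (1 - α) ^ 2 / 4 +
          m * ν₁ * (α * (1 - α) * ε * Real.sqrt ((n : ℝ) - 1)) / 2 +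
          m ^ 2 * (α ^ 2 * ((n : ℝ) - 1) * (ε ^ 2 + C ^ 2)) / 4) ∧
    ∀ A B : ℝ, 0 ≤ A → 0 ≤ B →
      (ν₁ * (1 + α) / 4 - α * ε * Real.sqrt ((n : ℝ) - 1) * m / 4 -
          (1 / 2) * Real.sqrt (ν₁ ^ 2 * (1 - α) ^ 2 / 4 +
            m * ν₁ * (α * (1 - α) * ε * Real.sqrt ((n : ℝ) - 1)) / 2 +
            m ^ 2 * (α ^ 2 * ((n : ℝ) - 1) * (ε ^ 2 + C ^ 2)) / 4)) * (A ^ 2 + B ^ 2) ≤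
        ν₁ / 2 * A ^ 2 + α * ν₁ / 2 * B ^ 2 -
          α * m * Real.sqrt ((n : ℝ) - 1) * C / 2 * (A * B) -
          α * ε * Real.sqrt ((n : ℝ) - 1) * m / 2 * B ^ 2 :=
  stmt16_general n hn α hα0 C ν₁ m ε hν₁ hm hε hmlt hεlt
end
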